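/- arXiv:1404.6758 — 11 statements merged into one kernel-verified Lean document; each statement's English description precedes it below -/
import Mathlib

section
/- Assume α̃ < 1. Then 0 < r < 1, and the 2×2 real matrix R = [[r, rθ/(θ̄·p̄(1)·μ_b·(1−r))], [0, α̃]] satisfies the matrix quadratic equation R = R²B₂' + R·A₁' + C₁', where A₁' = [[θ̄(1−p(0)μ̄_v−p̄(0)μ_v), θ(1−p(0)μ̄_v−p̄(0)μ_v)], [0, 1−p(1)μ̄_b−p̄(1)μ_b]], C₁' = [[p(0)θ̄μ̄_v, p(0)θμ̄_v], [0, p(1)μ̄_b]], and B₂' = [[p̄(0)θ̄μ_v, p̄(0)θμ_v], [0, p̄(1)μ_b]]. Moreover all entries of R are nonnegative. -/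
/-!
The first row of the block matrices `A₁'`, `B₂'`, `C₁'` is `(θ̄, θ)` times the scalar transition
probabilities of the vacation level, so after division by `θ̄` the `(1,1)` entry of the matrix
equation is the scalar quadratic `a x² - (β + a + c) x + c = 0` with `a = p̄(0) μ_v`, `c = p(0) μ̄_v`.
Its value at `1` is `-β < 0`, so its smaller root `r` lies in `(0, 1)`. The `(2,2)` entry is a
quadratic with roots `1` and `α̃`. Given those two, the `(1,2)` entry is linear in the unknown
off-diagonal entry `y` and reads `y θ̄ p̄(1) μ_b (1 - r) = θ r`.
-/

theorem quadratic_smallRoot_isRoot {a S c : ℝ} (ha : a ≠ 0) (hD : 0 ≤ S ^ 2 - 4 * a * c) :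
    a * ((S - √(S ^ 2 - 4 * a * c)) / (2 * a)) ^ 2
      - S * ((S - √(S ^ 2 - 4 * a * c)) / (2 * a)) + c = 0 := by
  have hdiscrim : discrim a (-S) c = √(S ^ 2 - 4 * a * c) * √(S ^ 2 - 4 * a * c) := by
    rw [Real.mul_self_sqrt hD, discrim, neg_sq]
  have hroot := (quadratic_eq_zero_iff ha hdiscrim _).2 (Or.inr (by rw [neg_neg]))
  linear_combination hroot

theorem quadratic_smallRoot_mem_Ioo {a S c : ℝ} (ha : 0 < a) (hc : 0 < c) (hS : a + c < S) :
    (S - √(S ^ 2 - 4 * a * c)) / (2 * a) ∈ Set.Ioo 0 1 := by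
  have hsqrt_lt : √(S ^ 2 - 4 * a * c) < S :=
    (Real.sqrt_lt' (by linarith)).2 (by nlinarith [mul_pos ha hc])
  have hsqrt_gt : S - 2 * a < √(S ^ 2 - 4 * a * c) := by
    rcases le_or_gt (S - 2 * a) 0 with h | h
    · exact h.trans_lt (Real.sqrt_pos.2 (by nlinarith [sq_nonneg (a - c)]))
    · exact (Real.lt_sqrt h.le).2 (by nlinarith)
  constructor
  · exact div_pos (by linarith) (by linarith)
  · rw [div_lt_one (by linarith)]
    linarith

theorem upperTriangular_eq_sq_mul_add_mul_add_iff {R : Type*} [CommRing R]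
    (x y z a₁ a₂ a₃ b₁ b₂ b₃ c₁ c₂ c₃ : R) :
    !![x, y; 0, z] = !![x, y; 0, z] ^ 2 * !![b₁, b₂; 0, b₃] + !![x, y; 0, z] * !![a₁, a₂; 0, a₃]
        + !![c₁, c₂; 0, c₃] ↔
      x = x ^ 2 * b₁ + x * a₁ + c₁ ∧
      y = x ^ 2 * b₂ + (x + z) * y * b₃ + x * a₂ + y * a₃ + c₂ ∧
      z = z ^ 2 * b₃ + z * a₃ + c₃ := by
  have hrhs : !![x, y; 0, z] ^ 2 * !![b₁, b₂; 0, b₃] + !![x, y; 0, z] * !![a₁, a₂; 0, a₃]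
      + !![c₁, c₂; 0, c₃] = !![x ^ 2 * b₁ + x * a₁ + c₁,
        x ^ 2 * b₂ + (x + z) * y * b₃ + x * a₂ + y * a₃ + c₂; 0, z ^ 2 * b₃ + z * a₃ + c₃] := by
    rw [sq, Matrix.mul_fin_two, Matrix.mul_fin_two, Matrix.mul_fin_two, Matrix.of_add_of,
      Matrix.of_add_of]
    simp only [Matrix.cons_add_cons, Matrix.empty_add_empty]
    ring_nf
  rw [hrhs]
  simp [and_assoc]

theorem div_eq_sq_mul_add_mul_add {K : Type*} [Field K] {b : K} (hb : b ≠ 0) (c : K) :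
    c / b = (c / b) ^ 2 * b + c / b * (1 - c - b) + c := by
  field_simp
  ring

theorem vacationRate_mem_Ioo_and_eq {μv θ p0 be r : ℝ}
    (hμv : μv ∈ Set.Ioo (0:ℝ) 1) (hθ : θ ∈ Set.Ioo (0:ℝ) 1) (hp0 : p0 ∈ Set.Ioo (0:ℝ) 1)
    (hbe : be = θ / (1 - θ))
    (hr : r = (be + p0 * (1 - μv) + (1 - p0) * μv -
        Real.sqrt ((be + p0 * (1 - μv) + (1 - p0) * μv) ^ 2 -
          4 * p0 * (1 - p0) * μv * (1 - μv))) / (2 * (1 - p0) * μv)) :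
    r ∈ Set.Ioo 0 1 ∧
      r = r ^ 2 * ((1 - p0) * (1 - θ) * μv) + r * ((1 - θ) * (1 - p0 * (1 - μv) - (1 - p0) * μv))
        + p0 * (1 - θ) * (1 - μv) := by
  obtain ⟨hμv0, hμv1⟩ := hμv
  obtain ⟨hθ0, hθ1⟩ := hθ
  obtain ⟨hp00, hp01⟩ := hp0
  have ha : 0 < (1 - p0) * μv := mul_pos (by linarith) hμv0
  have hc : 0 < p0 * (1 - μv) := mul_pos hp00 (by linarith)
  have hbe' : be * (1 - θ) = θ := by rw [hbe]; field_simp [show 1 - θ ≠ 0 by linarith]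
  set S := be + p0 * (1 - μv) + (1 - p0) * μv
  have hS : (1 - p0) * μv + p0 * (1 - μv) < S := by
    linarith [div_pos hθ0 (by linarith : 0 < 1 - θ)]
  have hr' : r = (S - √(S ^ 2 - 4 * ((1 - p0) * μv) * (p0 * (1 - μv)))) / (2 * ((1 - p0) * μv)) := by
    rw [hr]; ring_nf
  have hroot : (1 - p0) * μv * r ^ 2 - S * r + p0 * (1 - μv) = 0 := hr' ▸
    quadratic_smallRoot_isRoot ha.ne' (by nlinarith [sq_nonneg ((1 - p0) * μv - p0 * (1 - μv))])
  exact ⟨hr' ▸ quadratic_smallRoot_mem_Ioo ha hc hS,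
    by linear_combination -(1 - θ) * hroot - r * hbe'⟩

theorem stmt_0_general
    (μb μv θ p0 p1 al be r : ℝ)
    (hμb : μb ∈ Set.Ioo (0:ℝ) 1)
    (hμv : μv ∈ Set.Ioo (0:ℝ) 1) (hθ : θ ∈ Set.Ioo (0:ℝ) 1)
    (hp0m : p0 ∈ Set.Ioo (0:ℝ) 1) (hp1m : p1 ∈ Set.Ioo (0:ℝ) 1)
    (hal : al = p1 * (1 - μb) / ((1 - p1) * μb))
    (hbe : be = θ / (1 - θ))
    (hr : r = (be + p0 * (1 - μv) + (1 - p0) * μv -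
        Real.sqrt ((be + p0 * (1 - μv) + (1 - p0) * μv) ^ 2 -
          4 * p0 * (1 - p0) * μv * (1 - μv))) / (2 * (1 - p0) * μv)) :
    (0 < r ∧ r < 1) ∧
    (!![r, r * θ / ((1 - θ) * (1 - p1) * μb * (1 - r)); 0, al] : Matrix (Fin 2) (Fin 2) ℝ)
      = (!![r, r * θ / ((1 - θ) * (1 - p1) * μb * (1 - r)); 0, al] : Matrix (Fin 2) (Fin 2) ℝ) ^ 2 *
          (!![(1 - p0) * (1 - θ) * μv, (1 - p0) * θ * μv; 0, (1 - p1) * μb] : Matrix (Fin 2) (Fin 2) ℝ)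
        + (!![r, r * θ / ((1 - θ) * (1 - p1) * μb * (1 - r)); 0, al] : Matrix (Fin 2) (Fin 2) ℝ) *
          (!![(1 - θ) * (1 - p0 * (1 - μv) - (1 - p0) * μv),
              θ * (1 - p0 * (1 - μv) - (1 - p0) * μv);
              0, 1 - p1 * (1 - μb) - (1 - p1) * μb] : Matrix (Fin 2) (Fin 2) ℝ)
        + (!![p0 * (1 - θ) * (1 - μv), p0 * θ * (1 - μv); 0, p1 * (1 - μb)] : Matrix (Fin 2) (Fin 2) ℝ) ∧
    ∀ i j : Fin 2,
      0 ≤ (!![r, r * θ / ((1 - θ) * (1 - p1) * μb * (1 - r)); 0, al] : Matrix (Fin 2) (Fin 2) ℝ) i j := by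
  obtain ⟨⟨hr0, hr1⟩, hdiag⟩ := vacationRate_mem_Ioo_and_eq hμv hθ hp0m hbe hr
  obtain ⟨hμb0, hμb1⟩ := hμb
  obtain ⟨hp10, hp11⟩ := hp1m
  have hb : (1 - p1) * μb ≠ 0 := mul_ne_zero (by linarith) hμb0.ne'
  have hal' : al * ((1 - p1) * μb) = p1 * (1 - μb) := by rw [hal]; exact div_mul_cancel₀ _ hb
  have hden : 0 < (1 - θ) * (1 - p1) * μb * (1 - r) :=
    mul_pos (mul_pos (mul_pos (by linarith [hθ.2]) (by linarith)) hμb0) (by linarith)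
  set s := r * θ / ((1 - θ) * (1 - p1) * μb * (1 - r))
  have hs : s * ((1 - θ) * (1 - p1) * μb * (1 - r)) = r * θ := div_mul_cancel₀ _ hden.ne'
  refine ⟨⟨hr0, hr1⟩, (upperTriangular_eq_sq_mul_add_mul_add_iff ..).2
    ⟨hdiag, ?_, by rw [hal]; exact div_eq_sq_mul_add_mul_add hb _⟩, ?_⟩
  · refine mul_left_cancel₀ (sub_ne_zero.2 hθ.2.ne') ?_
    linear_combination θ * hdiag - (1 - θ) * s * hal' + hs
  · have hal0 : 0 ≤ al :=
      hal ▸ div_nonneg (mul_nonneg hp10.le (by linarith)) (mul_nonneg (by linarith) hμb0.le)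
    have hs0 : 0 ≤ s := div_nonneg (mul_nonneg hr0.le hθ.1.le) hden.le
    simpa [Fin.forall_fin_two] using ⟨⟨hr0.le, hs0⟩, hal0⟩

/-- Geo/Geo/1 with multiple working vacations, partially observable case.
If α̃ < 1, then 0 < r < 1, the matrix R satisfies R = R²B₂' + R A₁' + C₁',
and all entries of R are nonnegative. -/
theorem stmt_0
    (p μb μv θ q0 q1 p0 p1 al be r : ℝ)
    (hp : p ∈ Set.Ioo (0:ℝ) 1) (hμb : μb ∈ Set.Ioo (0:ℝ) 1)
    (hμv : μv ∈ Set.Ioo (0:ℝ) 1) (hθ : θ ∈ Set.Ioo (0:ℝ) 1)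
    (hq0 : q0 ∈ Set.Icc (0:ℝ) 1) (hq1 : q1 ∈ Set.Icc (0:ℝ) 1)
    (hp0 : p0 = p * q0) (hp1 : p1 = p * q1)
    (hp0m : p0 ∈ Set.Ioo (0:ℝ) 1) (hp1m : p1 ∈ Set.Ioo (0:ℝ) 1)
    (hal : al = p1 * (1 - μb) / ((1 - p1) * μb))
    (hbe : be = θ / (1 - θ))
    (hr : r = (be + p0 * (1 - μv) + (1 - p0) * μv -
        Real.sqrt ((be + p0 * (1 - μv) + (1 - p0) * μv) ^ 2 -
          4 * p0 * (1 - p0) * μv * (1 - μv))) / (2 * (1 - p0) * μv))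
    (hal1 : al < 1) :
    (0 < r ∧ r < 1) ∧
    (!![r, r * θ / ((1 - θ) * (1 - p1) * μb * (1 - r)); 0, al] : Matrix (Fin 2) (Fin 2) ℝ)
      = (!![r, r * θ / ((1 - θ) * (1 - p1) * μb * (1 - r)); 0, al] : Matrix (Fin 2) (Fin 2) ℝ) ^ 2 *
          (!![(1 - p0) * (1 - θ) * μv, (1 - p0) * θ * μv; 0, (1 - p1) * μb] : Matrix (Fin 2) (Fin 2) ℝ)
        + (!![r, r * θ / ((1 - θ) * (1 - p1) * μb * (1 - r)); 0, al] : Matrix (Fin 2) (Fin 2) ℝ) *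
          (!![(1 - θ) * (1 - p0 * (1 - μv) - (1 - p0) * μv),
              θ * (1 - p0 * (1 - μv) - (1 - p0) * μv);
              0, 1 - p1 * (1 - μb) - (1 - p1) * μb] : Matrix (Fin 2) (Fin 2) ℝ)
        + (!![p0 * (1 - θ) * (1 - μv), p0 * θ * (1 - μv); 0, p1 * (1 - μb)] : Matrix (Fin 2) (Fin 2) ℝ) ∧
    ∀ i j : Fin 2,
      0 ≤ (!![r, r * θ / ((1 - θ) * (1 - p1) * μb * (1 - r)); 0, al] : Matrix (Fin 2) (Fin 2) ℝ) i j :=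
  stmt_0_general μb μv θ p0 p1 al be r hμb hμv hθ hp0m hp1m hal hbe hr
end

section
/- Assume α̃ < 1 (hence 0 < r < 1). Then the family π is nonnegative, the series Σ_{k≥0} π_{k0} and Σ_{k≥1} π_{k1} converge, their total sum equals 1, and π satisfies the stationary balance equations of the partially observable chain: (i) π_{00} = p̄(0)π_{00} + p̄(0)μ_v π_{10} + p̄(1)μ_b π_{11}; (ii) π_{10} = p(0)θ̄ π_{00} + θ̄(1−p(0)μ̄_v−p̄(0)μ_v) π_{10} + θ̄ p̄(0) μ_v π_{20}; (iii) for every integer k ≥ 2, π_{k0} = θ̄ p(0) μ̄_v π_{k−1,0} + θ̄(1−p(0)μ̄_v−p̄(0)μ_v) π_{k0} + θ̄ p̄(0) μ_v π_{k+1,0}; (iv) π_{11} = p(0)θ π_{00} + θ(1−p(0)μ̄_v−p̄(0)μ_v) π_{10} + (1−p(1)μ̄_b−p̄(1)μ_b) π_{11} + θ p̄(0) μ_v π_{20} + p̄(1)μ_b π_{21}; (v) for every integer k ≥ 2, π_{k1} = θ p(0) μ̄_v π_{k−1,0} + p(1)μ̄_b π_{k−1,1} + θ(1−p(0)μ̄_v−p̄(0)μ_v)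 π_{k0} + (1−p(1)μ̄_b−p̄(1)μ_b) π_{k1} + θ p̄(0) μ_v π_{k+1,0} + p̄(1)μ_b π_{k+1,1}. -/
/-!
Write `a = p(0)μ̄_v`, `b = p̄(0)μ_v` for the up- and down-probabilities of the level during a
working vacation. Since `βθ̄ = θ`, the smaller root `r` of `b z² - (β + a + b) z + a` is a fixed
point of `z ↦ θ̄ (a + (1 - a - b) z + b z²)`, and this alone makes the geometric vacation levels
`π_{k0} ∝ r^{k-1}` balance. The busy levels are the convolution `G_n = Σ_{i ≤ n} r^i α̃^{n-i}`;
its recursion `G_{n+1} = r^{n+1} + α̃ G_n` together with `α̃ p̄(1)μ_b = p(1)μ̄_b` reduces the busy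
balance equations to the same fixed-point identity. Up to the factor `K`, the two masses are a
geometric series and a Cauchy product of two geometric series, and `K` is the reciprocal of their
sum.
-/

open Finset

noncomputable def smallerRoot (a b β : ℝ) : ℝ :=
  (β + a + b - √((β + a + b) ^ 2 - 4 * a * b)) / (2 * b)

section SmallerRoot

variable {a b β : ℝ}

lemma smallerRoot_radicand_pos (ha : 0 ≤ a) (hb : 0 ≤ b) (hβ : 0 < β) : 0 < (β + a + b) ^ 2 - 4 * a * b := by
  nlinarith [sq_nonneg (a - b)]

lemma smallerRoot_isRoot (ha : 0 ≤ a) (hb : 0 < b) (hβ : 0 < β) :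
    b * smallerRoot a b β ^ 2 - (β + a + b) * smallerRoot a b β + a = 0 := by
  have hs := Real.sq_sqrt (smallerRoot_radicand_pos ha hb.le hβ).le
  unfold smallerRoot
  set s := √((β + a + b) ^ 2 - 4 * a * b)
  field_simp
  linear_combination hs

lemma smallerRoot_pos (ha : 0 < a) (hb : 0 < b) (hβ : 0 < β) : 0 < smallerRoot a b β := by
  have hs : √((β + a + b) ^ 2 - 4 * a * b) < β + a + b :=
    (Real.sqrt_lt' (by linarith)).2 (by nlinarith [mul_pos ha hb])
  exact div_pos (by linarith) (by linarith)

lemma smallerRoot_lt_one (hb : 0 < b) (hβ : 0 < β) : smallerRoot a b β < 1 := by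
  have hs : β + a - b < √((β + a + b) ^ 2 - 4 * a * b) :=
    Real.lt_sqrt_of_sq_lt (by nlinarith [mul_pos hb hβ])
  rw [smallerRoot, div_lt_one (by linarith)]
  linarith

end SmallerRoot

theorem hasSum_geom_sum₂ {R : Type*} [NormedDivisionRing R] [CompleteSpace R] {x y : R}
    (hx : ‖x‖ < 1) (hy : ‖y‖ < 1) :
    HasSum (fun n ↦ ∑ i ∈ range (n + 1), x ^ i * y ^ (n - i)) ((1 - x)⁻¹ * (1 - y)⁻¹) := by
  simpa only [tsum_geometric_of_norm_lt_one hx, tsum_geometric_of_norm_lt_one hy] using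
    hasSum_sum_range_mul_of_summable_norm (summable_norm_geometric_of_norm_lt_one hx)
      (summable_norm_geometric_of_norm_lt_one hy)

def vacationGF (θ a b z : ℝ) : ℝ :=
  (1 - θ) * (a + (1 - a - b) * z + b * z ^ 2)

section Balance

variable {p0 p1 μb μv θ r al K c : ℝ} {π0 π1 G : ℕ → ℝ}

theorem balance_empty (hπ00 : π0 0 = K * (θ + (1 - θ) * (1 - p0) * μv * (1 - r)))
    (hπ0 : ∀ n, π0 (n + 1) = K * p0 * (1 - θ) * (1 - r) * r ^ n)
    (hπ1 : ∀ n, π1 (n + 1) = c * G n) (hc : c * ((1 - p1) * μb) = K * p0 * θ) (hG0 : G 0 = 1) :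
    π0 0 = (1 - p0) * π0 0 + (1 - p0) * μv * π0 1 + (1 - p1) * μb * π1 1 := by
  rw [hπ0, hπ1, hG0, hπ00]
  linear_combination -hc

theorem balance_vacation_one
    (hroot : vacationGF θ (p0 * (1 - μv)) ((1 - p0) * μv) r = r)
    (hπ00 : π0 0 = K * (θ + (1 - θ) * (1 - p0) * μv * (1 - r)))
    (hπ0 : ∀ n, π0 (n + 1) = K * p0 * (1 - θ) * (1 - r) * r ^ n) :
    π0 1 = p0 * (1 - θ) * π0 0 +
        (1 - θ) * (1 - p0 * (1 - μv) - (1 - p0) * μv) * π0 1 +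
        (1 - θ) * (1 - p0) * μv * π0 2 := by
  rw [hπ0, hπ0, hπ00]
  rw [vacationGF] at hroot
  linear_combination (K * p0 * (1 - θ)) * hroot

theorem balance_vacation_of_two_le {C : ℝ}
    (hroot : vacationGF θ (p0 * (1 - μv)) ((1 - p0) * μv) r = r)
    (hπ0 : ∀ n, π0 (n + 1) = C * r ^ n) (k : ℕ) (hk : 2 ≤ k) :
    π0 k = (1 - θ) * p0 * (1 - μv) * π0 (k - 1) +
        (1 - θ) * (1 - p0 * (1 - μv) - (1 - p0) * μv) * π0 k +
        (1 - θ) * (1 - p0) * μv * π0 (k + 1) := by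
  obtain ⟨m, rfl⟩ : ∃ m, k = m + 2 := ⟨k - 2, by omega⟩
  rw [show m + 2 - 1 = m + 1 by omega, hπ0, hπ0, hπ0]
  rw [vacationGF] at hroot
  linear_combination (-C * r ^ m) * hroot

theorem balance_busy_one
    (hroot : vacationGF θ (p0 * (1 - μv)) ((1 - p0) * μv) r = r)
    (hπ00 : π0 0 = K * (θ + (1 - θ) * (1 - p0) * μv * (1 - r)))
    (hπ0 : ∀ n, π0 (n + 1) = K * p0 * (1 - θ) * (1 - r) * r ^ n)
    (hπ1 : ∀ n, π1 (n + 1) = c * G n) (hc : c * ((1 - p1) * μb) = K * p0 * θ)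
    (hal : al * ((1 - p1) * μb) = p1 * (1 - μb))
    (hG0 : G 0 = 1) (hG : ∀ n, G (n + 1) = r ^ (n + 1) + al * G n) :
    π1 1 = p0 * θ * π0 0 + θ * (1 - p0 * (1 - μv) - (1 - p0) * μv) * π0 1 +
        (1 - p1 * (1 - μb) - (1 - p1) * μb) * π1 1 +
        θ * (1 - p0) * μv * π0 2 + (1 - p1) * μb * π1 2 := by
  rw [hπ0, hπ0, hπ1, hπ1, hG, hG0, hπ00]
  rw [vacationGF] at hroot
  linear_combination (-c) * hal + (1 - r) * hc + (K * p0 * θ) * hroot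

theorem balance_busy_of_two_le
    (hroot : vacationGF θ (p0 * (1 - μv)) ((1 - p0) * μv) r = r)
    (hπ0 : ∀ n, π0 (n + 1) = K * p0 * (1 - θ) * (1 - r) * r ^ n)
    (hπ1 : ∀ n, π1 (n + 1) = c * G n) (hc : c * ((1 - p1) * μb) = K * p0 * θ)
    (hal : al * ((1 - p1) * μb) = p1 * (1 - μb))
    (hG : ∀ n, G (n + 1) = r ^ (n + 1) + al * G n) (k : ℕ) (hk : 2 ≤ k) :
    π1 k = θ * p0 * (1 - μv) * π0 (k - 1) + p1 * (1 - μb) * π1 (k - 1) +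
        θ * (1 - p0 * (1 - μv) - (1 - p0) * μv) * π0 k +
        (1 - p1 * (1 - μb) - (1 - p1) * μb) * π1 k +
        θ * (1 - p0) * μv * π0 (k + 1) + (1 - p1) * μb * π1 (k + 1) := by
  obtain ⟨m, rfl⟩ : ∃ m, k = m + 2 := ⟨k - 2, by omega⟩
  rw [show m + 2 - 1 = m + 1 by omega, hπ0, hπ0, hπ0, hπ1, hπ1, hπ1, hG (m + 1), hG m]
  rw [vacationGF] at hroot
  linear_combination (c * (G m - r ^ (m + 1) - al * G m)) * hal + (r ^ (m + 1) * (1 - r)) * hc -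
    (K * p0 * θ * (1 - r) * r ^ m) * hroot

end Balance

theorem vacation_root_spec {p0 μv θ be r : ℝ}
    (hμv : μv ∈ Set.Ioo (0:ℝ) 1) (hθ : θ ∈ Set.Ioo (0:ℝ) 1) (hp0 : p0 ∈ Set.Ioo (0:ℝ) 1)
    (hbe : be = θ / (1 - θ))
    (hr : r = (be + p0 * (1 - μv) + (1 - p0) * μv -
        Real.sqrt ((be + p0 * (1 - μv) + (1 - p0) * μv) ^ 2 -
          4 * p0 * (1 - p0) * μv * (1 - μv))) / (2 * (1 - p0) * μv)) :
    r ∈ Set.Ioo (0:ℝ) 1 ∧ vacationGF θ (p0 * (1 - μv)) ((1 - p0) * μv) r = r := by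
  have h1θ : 0 < 1 - θ := sub_pos.2 hθ.2
  have hbe0 : 0 < be := hbe ▸ div_pos hθ.1 h1θ
  have ha : 0 < p0 * (1 - μv) := mul_pos hp0.1 (sub_pos.2 hμv.2)
  have hb : 0 < (1 - p0) * μv := mul_pos (sub_pos.2 hp0.2) hμv.1
  have hr' : r = smallerRoot (p0 * (1 - μv)) ((1 - p0) * μv) be := by
    rw [hr, smallerRoot]; ring_nf
  have hroot := smallerRoot_isRoot ha.le hb hbe0
  rw [← hr'] at hroot
  have hbeθ : be * (1 - θ) = θ := by rw [hbe]; field_simp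
  refine ⟨⟨hr' ▸ smallerRoot_pos ha hb hbe0, hr' ▸ smallerRoot_lt_one hb hbe0⟩, ?_⟩
  rw [vacationGF]
  linear_combination (1 - θ) * hroot + r * hbeθ

theorem summable_and_tsum_add_tsum_eq_one {μb μv θ p0 p1 al r K : ℝ} {π0 π1 : ℕ → ℝ}
    (hμb : 0 < μb) (hp1 : p1 < 1) (hr : r ∈ Set.Ioo (0:ℝ) 1) (hal0 : 0 ≤ al) (hal1 : al < 1)
    (hden : 0 < (1 - p1) * μb * (1 - r) * (1 - al) *
      (θ + (1 - θ) * (1 - p0) * μv * (1 - r) + p0 * (1 - θ)) + p0 * θ)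
    (hK : K = (1 - p1) * μb * (1 - r) * (1 - al) /
        ((1 - p1) * μb * (1 - r) * (1 - al) *
          (θ + (1 - θ) * (1 - p0) * μv * (1 - r) + p0 * (1 - θ)) + p0 * θ))
    (hπ00 : π0 0 = K * (θ + (1 - θ) * (1 - p0) * μv * (1 - r)))
    (hπ0 : ∀ n, π0 (n + 1) = K * p0 * (1 - θ) * (1 - r) * r ^ n)
    (hπ1 : ∀ n, π1 (n + 1) =
      K * (p0 * θ / ((1 - p1) * μb)) * ∑ i ∈ range (n + 1), r ^ i * al ^ (n - i)) :
    Summable π0 ∧ Summable (fun k : ℕ => π1 (k + 1)) ∧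
      (∑' k : ℕ, π0 k) + (∑' k : ℕ, π1 (k + 1)) = 1 := by
  have hS0 : HasSum π0 (π0 0 + K * p0 * (1 - θ) * (1 - r) * (1 - r)⁻¹) :=
    HasSum.zero_add <| by
      simpa only [hπ0] using (hasSum_geometric_of_lt_one hr.1.le hr.2).mul_left _
  have hS1 : HasSum (fun n => π1 (n + 1))
      (K * (p0 * θ / ((1 - p1) * μb)) * ((1 - r)⁻¹ * (1 - al)⁻¹)) := by
    simpa only [hπ1] using (hasSum_geom_sum₂ (x := r) (y := al)
      (by rw [Real.norm_of_nonneg hr.1.le]; exact hr.2) (by rwa [Real.norm_of_nonneg hal0])).mul_left _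
  have hKden := hK ▸ div_mul_cancel₀ _ hden.ne'
  refine ⟨hS0.summable, hS1.summable, ?_⟩
  rw [hS0.tsum_eq, hS1.tsum_eq, hπ00]
  field_simp [(sub_pos.2 hr.2).ne', (sub_pos.2 hal1).ne', (sub_pos.2 hp1).ne', hμb.ne']
  linear_combination hKden

theorem stmt_1_general
    (μb μv θ p0 p1 al be r K : ℝ) (π0 π1 : ℕ → ℝ)
    (hμb : μb ∈ Set.Ioo (0:ℝ) 1)
    (hμv : μv ∈ Set.Ioo (0:ℝ) 1) (hθ : θ ∈ Set.Ioo (0:ℝ) 1)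
    (hp0m : p0 ∈ Set.Ioo (0:ℝ) 1) (hp1m : p1 ∈ Set.Ioo (0:ℝ) 1)
    (hal : al = p1 * (1 - μb) / ((1 - p1) * μb))
    (hbe : be = θ / (1 - θ))
    (hr : r = (be + p0 * (1 - μv) + (1 - p0) * μv -
        Real.sqrt ((be + p0 * (1 - μv) + (1 - p0) * μv) ^ 2 -
          4 * p0 * (1 - p0) * μv * (1 - μv))) / (2 * (1 - p0) * μv))
    (hK : K = (1 - p1) * μb * (1 - r) * (1 - al) /
        ((1 - p1) * μb * (1 - r) * (1 - al) *
          (θ + (1 - θ) * (1 - p0) * μv * (1 - r) + p0 * (1 - θ)) + p0 * θ))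
    (hπ00 : π0 0 = K * (θ + (1 - θ) * (1 - p0) * μv * (1 - r)))
    (hπ0k : ∀ k : ℕ, 1 ≤ k → π0 k = K * p0 * (1 - θ) * (1 - r) * r ^ (k - 1))
    (hπ1k : ∀ k : ℕ, 1 ≤ k →
      π1 k = K * (p0 * θ / ((1 - p1) * μb)) * ∑ j ∈ Finset.range k, r ^ j * al ^ (k - 1 - j))
    (hal1 : al < 1) :
    (∀ k : ℕ, 0 ≤ π0 k) ∧ (∀ k : ℕ, 1 ≤ k → 0 ≤ π1 k) ∧
    Summable π0 ∧ Summable (fun k : ℕ => π1 (k + 1)) ∧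
    (∑' k : ℕ, π0 k) + (∑' k : ℕ, π1 (k + 1)) = 1 ∧
    π0 0 = (1 - p0) * π0 0 + (1 - p0) * μv * π0 1 + (1 - p1) * μb * π1 1 ∧
    π0 1 = p0 * (1 - θ) * π0 0 +
        (1 - θ) * (1 - p0 * (1 - μv) - (1 - p0) * μv) * π0 1 +
        (1 - θ) * (1 - p0) * μv * π0 2 ∧
    (∀ k : ℕ, 2 ≤ k →
      π0 k = (1 - θ) * p0 * (1 - μv) * π0 (k - 1) +
        (1 - θ) * (1 - p0 * (1 - μv) - (1 - p0) * μv) * π0 k +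
        (1 - θ) * (1 - p0) * μv * π0 (k + 1)) ∧
    π1 1 = p0 * θ * π0 0 + θ * (1 - p0 * (1 - μv) - (1 - p0) * μv) * π0 1 +
        (1 - p1 * (1 - μb) - (1 - p1) * μb) * π1 1 +
        θ * (1 - p0) * μv * π0 2 + (1 - p1) * μb * π1 2 ∧
    (∀ k : ℕ, 2 ≤ k →
      π1 k = θ * p0 * (1 - μv) * π0 (k - 1) + p1 * (1 - μb) * π1 (k - 1) +
        θ * (1 - p0 * (1 - μv) - (1 - p0) * μv) * π0 k +
        (1 - p1 * (1 - μb) - (1 - p1) * μb) * π1 k +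
        θ * (1 - p0) * μv * π0 (k + 1) + (1 - p1) * μb * π1 (k + 1)) := by
  obtain ⟨hr, hroot⟩ := vacation_root_spec hμv hθ hp0m hbe hr
  obtain ⟨hθ0, hθ1⟩ := hθ
  obtain ⟨hp00, hp01⟩ := hp0m
  have hμv0 := hμv.1
  have hr0 := hr.1
  have h1θ : 0 < 1 - θ := by linarith
  have h1p0 : 0 < 1 - p0 := by linarith
  have h1p1 : 0 < 1 - p1 := by linarith [hp1m.2]
  have h1r : 0 < 1 - r := by linarith [hr.2]
  have h1al : 0 < 1 - al := by linarith
  have hD : 0 < (1 - p1) * μb := mul_pos h1p1 hμb.1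
  have hal0 : 0 < al := hal ▸ div_pos (mul_pos hp1m.1 (sub_pos.2 hμb.2)) hD
  have halD : al * ((1 - p1) * μb) = p1 * (1 - μb) := by rw [hal, div_mul_cancel₀ _ hD.ne']
  have hden : 0 < (1 - p1) * μb * (1 - r) * (1 - al) *
      (θ + (1 - θ) * (1 - p0) * μv * (1 - r) + p0 * (1 - θ)) + p0 * θ := by positivity
  have hK0 : 0 < K := hK ▸ div_pos (by positivity) hden
  have hc : K * (p0 * θ / ((1 - p1) * μb)) * ((1 - p1) * μb) = K * p0 * θ := by
    rw [mul_assoc, div_mul_cancel₀ _ hD.ne', mul_assoc]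
  have hπ0 : ∀ n : ℕ, π0 (n + 1) = K * p0 * (1 - θ) * (1 - r) * r ^ n := fun n => by
    simpa using hπ0k (n + 1) (by omega)
  have hπ1 : ∀ n : ℕ, π1 (n + 1) =
      K * (p0 * θ / ((1 - p1) * μb)) * ∑ i ∈ range (n + 1), r ^ i * al ^ (n - i) := fun n => by
    simpa using hπ1k (n + 1) (by omega)
  have hG : ∀ n : ℕ, ∑ i ∈ range (n + 1 + 1), r ^ i * al ^ (n + 1 - i) =
      r ^ (n + 1) + al * ∑ i ∈ range (n + 1), r ^ i * al ^ (n - i) := fun n => by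
    simpa using geom_sum₂_succ_eq r al (n := n + 1)
  obtain ⟨hsum0, hsum1, hmass⟩ := summable_and_tsum_add_tsum_eq_one hμb.1 hp1m.2 hr hal0.le hal1
    hden hK hπ00 hπ0 hπ1
  refine ⟨?_, fun k hk => ?_, hsum0, hsum1, hmass,
    balance_empty hπ00 hπ0 hπ1 hc (by simp), balance_vacation_one hroot hπ00 hπ0,
    balance_vacation_of_two_le hroot hπ0, balance_busy_one hroot hπ00 hπ0 hπ1 hc halD (by simp) hG,
    balance_busy_of_two_le hroot hπ0 hπ1 hc halD hG⟩
  · rintro (_ | n)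
    · rw [hπ00]; positivity
    · rw [hπ0]; positivity
  · rw [hπ1k k hk]; positivity

/-- Geo/Geo/1 with multiple working vacations, partially observable case.
If α̃ < 1, the family π is nonnegative, summable with total mass 1, and satisfies
the stationary balance equations of the partially observable chain. -/
theorem stmt_1
    (p μb μv θ q0 q1 p0 p1 al be r K : ℝ) (π0 π1 : ℕ → ℝ)
    (hp : p ∈ Set.Ioo (0:ℝ) 1) (hμb : μb ∈ Set.Ioo (0:ℝ) 1)
    (hμv : μv ∈ Set.Ioo (0:ℝ) 1) (hθ : θ ∈ Set.Ioo (0:ℝ) 1)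
    (hq0 : q0 ∈ Set.Icc (0:ℝ) 1) (hq1 : q1 ∈ Set.Icc (0:ℝ) 1)
    (hp0 : p0 = p * q0) (hp1 : p1 = p * q1)
    (hp0m : p0 ∈ Set.Ioo (0:ℝ) 1) (hp1m : p1 ∈ Set.Ioo (0:ℝ) 1)
    (hal : al = p1 * (1 - μb) / ((1 - p1) * μb))
    (hbe : be = θ / (1 - θ))
    (hr : r = (be + p0 * (1 - μv) + (1 - p0) * μv -
        Real.sqrt ((be + p0 * (1 - μv) + (1 - p0) * μv) ^ 2 -
          4 * p0 * (1 - p0) * μv * (1 - μv))) / (2 * (1 - p0) * μv))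
    (hK : K = (1 - p1) * μb * (1 - r) * (1 - al) /
        ((1 - p1) * μb * (1 - r) * (1 - al) *
          (θ + (1 - θ) * (1 - p0) * μv * (1 - r) + p0 * (1 - θ)) + p0 * θ))
    (hπ00 : π0 0 = K * (θ + (1 - θ) * (1 - p0) * μv * (1 - r)))
    (hπ0k : ∀ k : ℕ, 1 ≤ k → π0 k = K * p0 * (1 - θ) * (1 - r) * r ^ (k - 1))
    (hπ1k : ∀ k : ℕ, 1 ≤ k →
      π1 k = K * (p0 * θ / ((1 - p1) * μb)) * ∑ j ∈ Finset.range k, r ^ j * al ^ (k - 1 - j))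
    (hal1 : al < 1) :
    (∀ k : ℕ, 0 ≤ π0 k) ∧ (∀ k : ℕ, 1 ≤ k → 0 ≤ π1 k) ∧
    Summable π0 ∧ Summable (fun k : ℕ => π1 (k + 1)) ∧
    (∑' k : ℕ, π0 k) + (∑' k : ℕ, π1 (k + 1)) = 1 ∧
    π0 0 = (1 - p0) * π0 0 + (1 - p0) * μv * π0 1 + (1 - p1) * μb * π1 1 ∧
    π0 1 = p0 * (1 - θ) * π0 0 +
        (1 - θ) * (1 - p0 * (1 - μv) - (1 - p0) * μv) * π0 1 +
        (1 - θ) * (1 - p0) * μv * π0 2 ∧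
    (∀ k : ℕ, 2 ≤ k →
      π0 k = (1 - θ) * p0 * (1 - μv) * π0 (k - 1) +
        (1 - θ) * (1 - p0 * (1 - μv) - (1 - p0) * μv) * π0 k +
        (1 - θ) * (1 - p0) * μv * π0 (k + 1)) ∧
    π1 1 = p0 * θ * π0 0 + θ * (1 - p0 * (1 - μv) - (1 - p0) * μv) * π0 1 +
        (1 - p1 * (1 - μb) - (1 - p1) * μb) * π1 1 +
        θ * (1 - p0) * μv * π0 2 + (1 - p1) * μb * π1 2 ∧
    (∀ k : ℕ, 2 ≤ k →
      π1 k = θ * p0 * (1 - μv) * π0 (k - 1) + p1 * (1 - μb) * π1 (k - 1) +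
        θ * (1 - p0 * (1 - μv) - (1 - p0) * μv) * π0 k +
        (1 - p1 * (1 - μb) - (1 - p1) * μb) * π1 k +
        θ * (1 - p0) * μv * π0 (k + 1) + (1 - p1) * μb * π1 (k + 1)) :=
  stmt_1_general μb μv θ p0 p1 al be r K π0 π1 hμb hμv hθ hp0m hp1m hal hbe hr hK hπ00 hπ0k hπ1k
    hal1
end

section
/- Consider the quadratic polynomial f(x) = p̄(0)μ_v·x² − (β + p(0)μ̄_v + p̄(0)μ_v)·x + p(0)μ̄_v. Its discriminant (β + p(0)μ̄_v + p̄(0)μ_v)² − 4 p(0) p̄(0) μ_v μ̄_v is strictly positive, f(r) = 0, 0 < r < 1, and the other root r⁺ = [β + p(0)μ̄_v + p̄(0)μ_v + √((β + p(0)μ̄_v + p̄(0)μ_v)² − 4 p(0) p̄(0) μ_v μ̄_v)]/(2 p̄(0) μ_v) satisfies r⁺ > 1. -/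
lemma quad_aux (a c be s r : ℝ) (ha : 0 < a) (hc : 0 < c) (hbe : 0 < be)
    (hs2 : s ^ 2 = (be + c + a) ^ 2 - 4 * a * c) (hs0 : 0 ≤ s)
    (hr : r = (be + c + a - s) / (2 * a)) :
    0 < (be + c + a) ^ 2 - 4 * a * c ∧
    a * r ^ 2 - (be + c + a) * r + c = 0 ∧
    0 < r ∧ r < 1 ∧ (be + c + a + s) / (2 * a) > 1 := by
  have hD : 0 < (be + c + a) ^ 2 - 4 * a * c := by
    nlinarith [sq_nonneg (a - c), mul_pos hbe (add_pos ha hc), sq_nonneg be]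
  have hspos : 0 < s := by
    rcases hs0.lt_or_eq with h | h
    · exact h
    · exfalso; nlinarith
  have hb' : 0 < be + c + a := by linarith
  have hbs : s < be + c + a := by nlinarith [mul_pos ha hc]
  have h1 : 0 < r := by
    rw [hr]; exact div_pos (by linarith) (by linarith)
  have h2 : a * r ^ 2 - (be + c + a) * r + c = 0 := by
    rw [hr]; field_simp; nlinarith [hs2]
  have hbea : be + c + a - 2 * a < s := by
    nlinarith [mul_pos ha hbe, sq_nonneg (s + (be + c + a - 2 * a))]
  have h3 : r < 1 := by
    rw [hr, div_lt_one (by positivity)]; linarith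
  have h4 : (be + c + a + s) / (2 * a) > 1 := by
    rw [gt_iff_lt, lt_div_iff₀ (by positivity)]
    nlinarith [mul_pos ha hbe, sq_nonneg (s - (2 * a - (be + c + a)))]
  exact ⟨hD, h2, h1, h3, h4⟩

/-- The quadratic f(x) = p̄(0)μ_v x² − (β + p(0)μ̄_v + p̄(0)μ_v) x + p(0)μ̄_v has strictly positive
discriminant, f(r) = 0, 0 < r < 1, and the other root r⁺ satisfies r⁺ > 1. -/
theorem stmt_2
    (p μb μv θ q0 q1 p0 p1 al be r : ℝ)
    (hp : p ∈ Set.Ioo (0:ℝ) 1) (hμb : μb ∈ Set.Ioo (0:ℝ) 1)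
    (hμv : μv ∈ Set.Ioo (0:ℝ) 1) (hθ : θ ∈ Set.Ioo (0:ℝ) 1)
    (hq0 : q0 ∈ Set.Icc (0:ℝ) 1) (hq1 : q1 ∈ Set.Icc (0:ℝ) 1)
    (hp0 : p0 = p * q0) (hp1 : p1 = p * q1)
    (hp0m : p0 ∈ Set.Ioo (0:ℝ) 1) (hp1m : p1 ∈ Set.Ioo (0:ℝ) 1)
    (hal : al = p1 * (1 - μb) / ((1 - p1) * μb))
    (hbe : be = θ / (1 - θ))
    (hr : r = (be + p0 * (1 - μv) + (1 - p0) * μv -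
        Real.sqrt ((be + p0 * (1 - μv) + (1 - p0) * μv) ^ 2 -
          4 * p0 * (1 - p0) * μv * (1 - μv))) / (2 * (1 - p0) * μv)) :
    0 < (be + p0 * (1 - μv) + (1 - p0) * μv) ^ 2 - 4 * p0 * (1 - p0) * μv * (1 - μv) ∧
    (1 - p0) * μv * r ^ 2 - (be + p0 * (1 - μv) + (1 - p0) * μv) * r + p0 * (1 - μv) = 0 ∧
    0 < r ∧ r < 1 ∧
    (be + p0 * (1 - μv) + (1 - p0) * μv +
        Real.sqrt ((be + p0 * (1 - μv) + (1 - p0) * μv) ^ 2 -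
          4 * p0 * (1 - p0) * μv * (1 - μv))) / (2 * (1 - p0) * μv) > 1 := by
  obtain ⟨hp0a, hp0b⟩ := hp0m
  obtain ⟨hμva, hμvb⟩ := hμv
  obtain ⟨hθa, hθb⟩ := hθ
  have hbe' : 0 < be := by rw [hbe]; exact div_pos hθa (by linarith)
  have ha' : 0 < (1 - p0) * μv := by nlinarith
  have hc' : 0 < p0 * (1 - μv) := by nlinarith
  have hDeq : (be + p0 * (1 - μv) + (1 - p0) * μv) ^ 2 - 4 * p0 * (1 - p0) * μv * (1 - μv)
      = (be + p0 * (1 - μv) + (1 - p0) * μv) ^ 2 - 4 * ((1 - p0) * μv) * (p0 * (1 - μv)) := by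
    ring
  set D := (be + p0 * (1 - μv) + (1 - p0) * μv) ^ 2 - 4 * p0 * (1 - p0) * μv * (1 - μv) with hDdef
  have hDnn : (0:ℝ) ≤ D := by
    rw [hDdef]; nlinarith [sq_nonneg (p0 * (1 - μv) - (1 - p0) * μv), sq_nonneg be,
      mul_pos hbe' (add_pos hc' ha')]
  have hs2 : (Real.sqrt D) ^ 2 = (be + p0 * (1 - μv) + (1 - p0) * μv) ^ 2
      - 4 * ((1 - p0) * μv) * (p0 * (1 - μv)) := by
    rw [Real.sq_sqrt hDnn, hDdef]; ring
  have hr' : r = (be + p0 * (1 - μv) + (1 - p0) * μv - Real.sqrt D) / (2 * ((1 - p0) * μv)) := by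
    rw [hr]; ring_nf
  have key := quad_aux ((1 - p0) * μv) (p0 * (1 - μv)) be (Real.sqrt D) r ha' hc' hbe'
    hs2 (Real.sqrt_nonneg D) hr'
  obtain ⟨k1, k2, k3, k4, k5⟩ := key
  refine ⟨?_, by linarith [k2], k3, k4, ?_⟩
  · rw [hDeq] at *; linarith [k1]
  · calc (1:ℝ) < (be + p0 * (1 - μv) + (1 - p0) * μv + Real.sqrt D) / (2 * ((1 - p0) * μv)) := k5
      _ = (be + p0 * (1 - μv) + (1 - p0) * μv + Real.sqrt D) / (2 * (1 - p0) * μv) := by ring_nf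
end

section
/- Assume α̃ < 1 (hence 0 < r < 1). Then the probability that the server is in a working vacation period satisfies P(J=0) = Σ_{k≥0} π_{k0} = K·(θ/(1−r) + θ̄μ_v). -/
/-!
The rate `r` is the smaller root of `p̄₀μ_v x² - (β + p₀μ̄_v + p̄₀μ_v) x + p₀μ̄_v`. This quadratic
is positive at `0` and equals `-β < 0` at `1`, so `0 < r < 1` and `Σ_{k≥1} π_{k0}` is a convergent
geometric series with sum `K p₀ θ̄`. Using the quadratic equation for `r`, the total
`K (θ + θ̄ p̄₀ μ_v (1 - r) + p₀ θ̄)` rewrites as `K (θ/(1 - r) + θ̄ μ_v)`.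
-/

open Real

lemma quadratic_eq_zero_of_eq_sub_sqrt_discrim_div {a c S r : ℝ} (ha : a ≠ 0)
    (hD : 0 ≤ S ^ 2 - 4 * a * c) (hr : r = (S - √(S ^ 2 - 4 * a * c)) / (2 * a)) :
    a * r ^ 2 - S * r + c = 0 := by
  have hdiscrim : discrim a (-S) c = √(S ^ 2 - 4 * a * c) * √(S ^ 2 - 4 * a * c) := by
    rw [mul_self_sqrt hD, discrim]
    ring
  have hroot := (quadratic_eq_zero_iff ha hdiscrim r).mpr (Or.inr (by rw [neg_neg, hr]))
  linear_combination hroot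

lemma sub_sqrt_discrim_div_mem_Ioo {a c S : ℝ} (ha : 0 < a) (hc : 0 < c) (hS : a + c < S) :
    (S - √(S ^ 2 - 4 * a * c)) / (2 * a) ∈ Set.Ioo 0 1 := by
  have hsqrt_lt : √(S ^ 2 - 4 * a * c) < S :=
    (sqrt_lt' (by linarith)).mpr (by nlinarith)
  have hlt_sqrt : S - 2 * a < √(S ^ 2 - 4 * a * c) :=
    lt_sqrt_of_sq_lt (by nlinarith)
  constructor
  · exact div_pos (by linarith) (by linarith)
  · rw [div_lt_one (by linarith)]
    linarith

lemma hasSum_of_succ_eq_geometric {f : ℕ → ℝ} {c r : ℝ} (hr : |r| < 1)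
    (hsucc : ∀ k, f (k + 1) = c * r ^ k) : HasSum f (f 0 + c * (1 - r)⁻¹) := by
  refine HasSum.zero_add ?_
  simp only [hsucc]
  exact (hasSum_geometric_of_abs_lt_one hr).mul_left c

lemma vacation_mass_eq {θ p₀ μv r : ℝ} (hθ : θ ≠ 1) (hr : r ≠ 1)
    (hquad : (1 - p₀) * μv * r ^ 2 - (θ / (1 - θ) + p₀ * (1 - μv) + (1 - p₀) * μv) * r
      + p₀ * (1 - μv) = 0) :
    θ + (1 - θ) * (1 - p₀) * μv * (1 - r) + p₀ * (1 - θ) = θ / (1 - r) + (1 - θ) * μv := by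
  have hθ' : 1 - θ ≠ 0 := sub_ne_zero.mpr hθ.symm
  have hr' : 1 - r ≠ 0 := sub_ne_zero.mpr hr.symm
  field_simp at hquad ⊢
  linear_combination hquad

theorem stmt_6_general
    (μv θ p0 be r K : ℝ) (π0 : ℕ → ℝ)
    (hμv : μv ∈ Set.Ioo (0:ℝ) 1) (hθ : θ ∈ Set.Ioo (0:ℝ) 1)
    (hp0m : p0 ∈ Set.Ioo (0:ℝ) 1)
    (hbe : be = θ / (1 - θ))
    (hr : r = (be + p0 * (1 - μv) + (1 - p0) * μv -
        Real.sqrt ((be + p0 * (1 - μv) + (1 - p0) * μv) ^ 2 -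
          4 * p0 * (1 - p0) * μv * (1 - μv))) / (2 * (1 - p0) * μv))
    (hπ00 : π0 0 = K * (θ + (1 - θ) * (1 - p0) * μv * (1 - r)))
    (hπ0k : ∀ k : ℕ, 1 ≤ k → π0 k = K * p0 * (1 - θ) * (1 - r) * r ^ (k - 1)) :
    Summable π0 ∧ (∑' k : ℕ, π0 k) = K * (θ / (1 - r) + (1 - θ) * μv) := by
  obtain ⟨hμv0, hμv1⟩ := hμv
  obtain ⟨hθ0, hθ1⟩ := hθ
  obtain ⟨hp00, hp01⟩ := hp0m
  have hbe0 : 0 < be := hbe ▸ div_pos hθ0 (by linarith)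
  have hr' : r = (be + p0 * (1 - μv) + (1 - p0) * μv -
      √((be + p0 * (1 - μv) + (1 - p0) * μv) ^ 2 -
        4 * ((1 - p0) * μv) * (p0 * (1 - μv)))) / (2 * ((1 - p0) * μv)) := by
    rw [hr]; ring_nf
  obtain ⟨hr0, hr1⟩ : r ∈ Set.Ioo 0 1 :=
    hr' ▸ sub_sqrt_discrim_div_mem_Ioo (by positivity) (by positivity) (by linarith)
  have hquad := quadratic_eq_zero_of_eq_sub_sqrt_discrim_div (by positivity)
    (by nlinarith [sq_nonneg (p0 * (1 - μv) - (1 - p0) * μv), mul_pos hp00 (sub_pos.mpr hμv1),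
      mul_pos (sub_pos.mpr hp01) hμv0]) hr'
  rw [hbe] at hquad
  have hsum := hasSum_of_succ_eq_geometric (c := K * p0 * (1 - θ) * (1 - r))
    (abs_lt.mpr ⟨by linarith, hr1⟩) fun k => hπ0k (k + 1) k.succ_pos
  refine ⟨hsum.summable, hsum.tsum_eq.trans ?_⟩
  rw [hπ00, ← vacation_mass_eq hθ1.ne hr1.ne hquad]
  field_simp [(sub_pos.mpr hr1).ne']

/-- Geo/Geo/1 with multiple working vacations, partially observable case.
P(J = 0) = Σ_{k≥0} π_{k0} = K (θ/(1-r) + θ̄ μ_v). -/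
theorem stmt_6
    (p μb μv θ q0 q1 p0 p1 al be r K : ℝ) (π0 π1 : ℕ → ℝ)
    (hp : p ∈ Set.Ioo (0:ℝ) 1) (hμb : μb ∈ Set.Ioo (0:ℝ) 1)
    (hμv : μv ∈ Set.Ioo (0:ℝ) 1) (hθ : θ ∈ Set.Ioo (0:ℝ) 1)
    (hq0 : q0 ∈ Set.Icc (0:ℝ) 1) (hq1 : q1 ∈ Set.Icc (0:ℝ) 1)
    (hp0 : p0 = p * q0) (hp1 : p1 = p * q1)
    (hp0m : p0 ∈ Set.Ioo (0:ℝ) 1) (hp1m : p1 ∈ Set.Ioo (0:ℝ) 1)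
    (hal : al = p1 * (1 - μb) / ((1 - p1) * μb))
    (hbe : be = θ / (1 - θ))
    (hr : r = (be + p0 * (1 - μv) + (1 - p0) * μv -
        Real.sqrt ((be + p0 * (1 - μv) + (1 - p0) * μv) ^ 2 -
          4 * p0 * (1 - p0) * μv * (1 - μv))) / (2 * (1 - p0) * μv))
    (hK : K = (1 - p1) * μb * (1 - r) * (1 - al) /
        ((1 - p1) * μb * (1 - r) * (1 - al) *
          (θ + (1 - θ) * (1 - p0) * μv * (1 - r) + p0 * (1 - θ)) + p0 * θ))
    (hπ00 : π0 0 = K * (θ + (1 - θ) * (1 - p0) * μv * (1 - r)))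
    (hπ0k : ∀ k : ℕ, 1 ≤ k → π0 k = K * p0 * (1 - θ) * (1 - r) * r ^ (k - 1))
    (hπ1k : ∀ k : ℕ, 1 ≤ k →
      π1 k = K * (p0 * θ / ((1 - p1) * μb)) * ∑ j ∈ Finset.range k, r ^ j * al ^ (k - 1 - j))
    (hal1 : al < 1) :
    Summable π0 ∧ (∑' k : ℕ, π0 k) = K * (θ / (1 - r) + (1 - θ) * μv) :=
  stmt_6_general μv θ p0 be r K π0 hμv hθ hp0m hbe hr hπ00 hπ0k
end

section
/- Assume α̃ < 1 (hence 0 < r < 1). Then the probability that the server is in a regular busy period satisfies P(J=1) = Σ_{k≥1} π_{k1} = K·p(0)θ / (p̄(1)μ_b(1−α̃)(1−r)). -/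
/-!
The sequence `π_{k+1,1}` is a constant multiple of the Cauchy product of the geometric sequences
`r^k` and `α̃^k`, so its sum is that constant times `(1 - r)⁻¹ (1 - α̃)⁻¹`. Both series converge:
`0 < α̃ < 1` by hypothesis, and `r ∈ (0, 1)` because it is the smaller root of a quadratic that is
positive at `0` and negative at `1`.
-/

open Finset

theorem hasSum_sum_range_pow_mul_pow {𝕜 : Type*} [NormedDivisionRing 𝕜] {x y : 𝕜}
    (hx : ‖x‖ < 1) (hy : ‖y‖ < 1) :
    HasSum (fun n : ℕ => ∑ j ∈ range (n + 1), x ^ j * y ^ (n - j)) ((1 - x)⁻¹ * (1 - y)⁻¹) := by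
  have hxn := summable_norm_geometric_of_norm_lt_one hx
  have hyn := summable_norm_geometric_of_norm_lt_one hy
  have hgx := hasSum_geometric_of_norm_lt_one hx
  have hgy := hasSum_geometric_of_norm_lt_one hy
  convert (summable_sum_mul_range_of_summable_norm' hxn hgx.summable hyn hgy.summable).hasSum
  rw [← hgx.tsum_eq, ← hgy.tsum_eq,
    tsum_mul_tsum_eq_tsum_sum_range_of_summable_norm' hxn hgx.summable hyn hgy.summable]

/-- This is the smaller root of `y t² - (b + x + y) t + x`, which is `x > 0` at `0` and `-b < 0`
at `1`. -/
theorem smaller_root_mem_Ioo {b x y : ℝ} (hb : 0 < b) (hx : 0 < x) (hy : 0 < y) :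
    (b + x + y - Real.sqrt ((b + x + y) ^ 2 - 4 * x * y)) / (2 * y) ∈ Set.Ioo 0 1 := by
  set a := b + x + y
  have ha0 : 0 < a := by positivity
  have hsqrt_lt : Real.sqrt (a ^ 2 - 4 * x * y) < a :=
    (Real.sqrt_lt' ha0).2 (by nlinarith [mul_pos hx hy])
  have hlt_sqrt : a - 2 * y < Real.sqrt (a ^ 2 - 4 * x * y) :=
    Real.lt_sqrt_of_sq_lt (by nlinarith [mul_pos hb hy])
  constructor
  · exact div_pos (by linarith) (by positivity)
  · rw [div_lt_one (by positivity)]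
    linarith

theorem stmt_7_general
    (μb μv θ p0 p1 al be r K : ℝ) (π1 : ℕ → ℝ)
    (hμb : μb ∈ Set.Ioo (0:ℝ) 1)
    (hμv : μv ∈ Set.Ioo (0:ℝ) 1) (hθ : θ ∈ Set.Ioo (0:ℝ) 1)
    (hp0m : p0 ∈ Set.Ioo (0:ℝ) 1) (hp1m : p1 ∈ Set.Ioo (0:ℝ) 1)
    (hal : al = p1 * (1 - μb) / ((1 - p1) * μb))
    (hbe : be = θ / (1 - θ))
    (hr : r = (be + p0 * (1 - μv) + (1 - p0) * μv -
        Real.sqrt ((be + p0 * (1 - μv) + (1 - p0) * μv) ^ 2 -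
          4 * p0 * (1 - p0) * μv * (1 - μv))) / (2 * (1 - p0) * μv))
    (hπ1k : ∀ k : ℕ, 1 ≤ k →
      π1 k = K * (p0 * θ / ((1 - p1) * μb)) * ∑ j ∈ Finset.range k, r ^ j * al ^ (k - 1 - j))
    (hal1 : al < 1) :
    Summable (fun k : ℕ => π1 (k + 1)) ∧
    (∑' k : ℕ, π1 (k + 1)) = K * p0 * θ / ((1 - p1) * μb * (1 - al) * (1 - r)) := by
  obtain ⟨hμb0, hμb1⟩ := hμb
  obtain ⟨hμv0, hμv1⟩ := hμv
  obtain ⟨hθ0, hθ1⟩ := hθ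
  obtain ⟨hp00, hp01⟩ := hp0m
  obtain ⟨hp10, hp11⟩ := hp1m
  obtain ⟨hr0, hr1⟩ : r ∈ Set.Ioo 0 1 := by
    rw [hr, mul_assoc 2, show 4 * p0 * (1 - p0) * μv * (1 - μv)
      = 4 * (p0 * (1 - μv)) * ((1 - p0) * μv) by ring]
    exact smaller_root_mem_Ioo (hbe ▸ div_pos hθ0 (by linarith))
      (mul_pos hp00 (by linarith)) (mul_pos (by linarith) hμv0)
  have hal0 : 0 < al := hal ▸ div_pos (mul_pos hp10 (by linarith)) (mul_pos (by linarith) hμb0)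
  have hπ1 : (fun k => π1 (k + 1)) = fun k =>
      K * (p0 * θ / ((1 - p1) * μb)) * ∑ j ∈ range (k + 1), r ^ j * al ^ (k - j) := by
    ext k
    simp only [hπ1k (k + 1) k.succ_pos, Nat.add_sub_cancel]
  have hsum : HasSum (fun k => π1 (k + 1))
      (K * (p0 * θ / ((1 - p1) * μb)) * ((1 - r)⁻¹ * (1 - al)⁻¹)) := by
    rw [hπ1]
    have hr_norm : ‖r‖ < 1 := by rwa [Real.norm_of_nonneg hr0.le]
    have hal_norm : ‖al‖ < 1 := by rwa [Real.norm_of_nonneg hal0.le]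
    exact (hasSum_sum_range_pow_mul_pow hr_norm hal_norm).mul_left _
  refine ⟨hsum.summable, hsum.tsum_eq.trans ?_⟩
  have : (1 - p1) * μb ≠ 0 := by positivity
  have : 1 - r ≠ 0 := by linarith
  have : 1 - al ≠ 0 := by linarith
  field_simp

/-- Geo/Geo/1 with multiple working vacations, partially observable case.
P(J = 1) = Σ_{k≥1} π_{k1} = K p(0) θ / (p̄(1) μ_b (1-α̃)(1-r)). -/
theorem stmt_7
    (p μb μv θ q0 q1 p0 p1 al be r K : ℝ) (π0 π1 : ℕ → ℝ)
    (hp : p ∈ Set.Ioo (0:ℝ) 1) (hμb : μb ∈ Set.Ioo (0:ℝ) 1)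
    (hμv : μv ∈ Set.Ioo (0:ℝ) 1) (hθ : θ ∈ Set.Ioo (0:ℝ) 1)
    (hq0 : q0 ∈ Set.Icc (0:ℝ) 1) (hq1 : q1 ∈ Set.Icc (0:ℝ) 1)
    (hp0 : p0 = p * q0) (hp1 : p1 = p * q1)
    (hp0m : p0 ∈ Set.Ioo (0:ℝ) 1) (hp1m : p1 ∈ Set.Ioo (0:ℝ) 1)
    (hal : al = p1 * (1 - μb) / ((1 - p1) * μb))
    (hbe : be = θ / (1 - θ))
    (hr : r = (be + p0 * (1 - μv) + (1 - p0) * μv -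
        Real.sqrt ((be + p0 * (1 - μv) + (1 - p0) * μv) ^ 2 -
          4 * p0 * (1 - p0) * μv * (1 - μv))) / (2 * (1 - p0) * μv))
    (hK : K = (1 - p1) * μb * (1 - r) * (1 - al) /
        ((1 - p1) * μb * (1 - r) * (1 - al) *
          (θ + (1 - θ) * (1 - p0) * μv * (1 - r) + p0 * (1 - θ)) + p0 * θ))
    (hπ00 : π0 0 = K * (θ + (1 - θ) * (1 - p0) * μv * (1 - r)))
    (hπ0k : ∀ k : ℕ, 1 ≤ k → π0 k = K * p0 * (1 - θ) * (1 - r) * r ^ (k - 1))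
    (hπ1k : ∀ k : ℕ, 1 ≤ k →
      π1 k = K * (p0 * θ / ((1 - p1) * μb)) * ∑ j ∈ Finset.range k, r ^ j * al ^ (k - 1 - j))
    (hal1 : al < 1) :
    Summable (fun k : ℕ => π1 (k + 1)) ∧
    (∑' k : ℕ, π1 (k + 1)) = K * p0 * θ / ((1 - p1) * μb * (1 - al) * (1 - r)) :=
  stmt_7_general μb μv θ p0 p1 al be r K π1 hμb hμv hθ hp0m hp1m hal hbe hr hπ1k hal1
end

section
/- Assume α̃ < 1 (hence 0 < r < 1). Then the conditional mean queue length in a regular busy period satisfies E[L₁] = (Σ_{k≥1} k·π_{k1}) / (Σ_{k≥1} π_{k1}) = (1 − rα̃) / ((1−α̃)(1−r)). -/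
/-!
Up to the constant `C = K p(0) θ / (p̄(1) μ_b)`, `π_{k+1,1}` is the coefficient `h_k` of `t ^ k` in
`1 / ((1 - r t) (1 - α̃ t))`, the Cauchy product of the geometric sequences `r ^ k` and `α̃ ^ k`.
Both ratios lie in `(0, 1)`: `α̃` by assumption, and `r` because it is the smaller root of
`p̄(0) μ_v x² - (β + p(0) μ̄_v + p̄(0) μ_v) x + p(0) μ̄_v`, which is positive at `0` and negative at `1`.
Splitting `k + 1 = j + (k - j) + 1` in the `j`-th term of `h_k` writes `Σ (k + 1) h_k` as three
Cauchy products of the series `Σ xⁿ` and `Σ n xⁿ`, whence `Σ h_k = 1 / ((1 - r) (1 - α̃))` and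
`Σ (k + 1) h_k = (1 - r α̃) / ((1 - r)² (1 - α̃)²)`; the constant `C` cancels in the quotient.
-/

open Finset

lemma quadratic_smaller_root_mem_Ioo {a b c : ℝ} (ha : 0 < a) (hb : 0 < b) (hc : 0 < c) :
    (b + c + a - √((b + c + a) ^ 2 - 4 * a * c)) / (2 * a) ∈ Set.Ioo 0 1 := by
  have hsqrt_lt : √((b + c + a) ^ 2 - 4 * a * c) < b + c + a :=
    (Real.sqrt_lt' (by linarith)).2 (by nlinarith [mul_pos ha hc])
  have hsqrt_gt : b + c - a < √((b + c + a) ^ 2 - 4 * a * c) :=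
    Real.lt_sqrt_of_sq_lt (by nlinarith [mul_pos ha hb])
  constructor
  · exact div_pos (by linarith) (by linarith)
  · rw [div_lt_one (by linarith)]
    linarith

section CauchyProduct

variable {R : Type*} [NormedRing R]

lemma hasSum_sum_range_mul {f g : ℕ → R} {a b : R} (hf : HasSum f a) (hg : HasSum g b)
    (hf' : Summable fun n ↦ ‖f n‖) (hg' : Summable fun n ↦ ‖g n‖) :
    HasSum (fun n ↦ ∑ k ∈ range (n + 1), f k * g (n - k)) (a * b) := by
  simpa only [hf.tsum_eq, hg.tsum_eq] using
    hasSum_sum_range_mul_of_summable_norm' hf' hf.summable hg' hg.summable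

end CauchyProduct

section GeomConv

variable {𝕜 : Type*} [NormedField 𝕜] {x y : 𝕜}

/-- The coefficient of `t ^ n` in `1 / ((1 - x t) (1 - y t))`. -/
def geomConv (x y : 𝕜) (n : ℕ) : 𝕜 :=
  ∑ j ∈ range (n + 1), x ^ j * y ^ (n - j)

lemma one_sub_ne_zero_of_norm_lt_one (hx : ‖x‖ < 1) : 1 - x ≠ 0 :=
  sub_ne_zero.2 fun h ↦ by simp [← h] at hx

lemma summable_norm_coe_mul_geometric (hx : ‖x‖ < 1) :
    Summable fun n : ℕ ↦ ‖(n : 𝕜) * x ^ n‖ := by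
  simpa using summable_norm_pow_mul_geometric_of_norm_lt_one 1 hx

lemma hasSum_geomConv (hx : ‖x‖ < 1) (hy : ‖y‖ < 1) :
    HasSum (geomConv x y) ((1 - x)⁻¹ * (1 - y)⁻¹) :=
  hasSum_sum_range_mul (hasSum_geometric_of_norm_lt_one hx) (hasSum_geometric_of_norm_lt_one hy)
    (summable_norm_geometric_of_norm_lt_one hx) (summable_norm_geometric_of_norm_lt_one hy)

lemma succ_mul_geomConv (n : ℕ) :
    ((n : 𝕜) + 1) * geomConv x y n =
      (∑ j ∈ range (n + 1), ((j : 𝕜) * x ^ j) * y ^ (n - j)) +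
        (∑ j ∈ range (n + 1), x ^ j * (((n - j : ℕ) : 𝕜) * y ^ (n - j))) + geomConv x y n := by
  rw [geomConv, mul_sum, ← sum_add_distrib, ← sum_add_distrib]
  refine sum_congr rfl fun j hj ↦ ?_
  rw [Nat.cast_sub (Nat.lt_succ_iff.1 (mem_range.1 hj))]
  ring

lemma hasSum_succ_mul_geomConv (hx : ‖x‖ < 1) (hy : ‖y‖ < 1) :
    HasSum (fun n : ℕ ↦ ((n : 𝕜) + 1) * geomConv x y n)
      ((1 - x * y) / ((1 - x) ^ 2 * (1 - y) ^ 2)) := by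
  have hx₁ := one_sub_ne_zero_of_norm_lt_one hx
  have hy₁ := one_sub_ne_zero_of_norm_lt_one hy
  have hleft : HasSum (fun n ↦ ∑ j ∈ range (n + 1), ((j : 𝕜) * x ^ j) * y ^ (n - j))
      (x / (1 - x) ^ 2 * (1 - y)⁻¹) :=
    hasSum_sum_range_mul (f := fun n : ℕ ↦ (n : 𝕜) * x ^ n) (g := (y ^ ·))
      (hasSum_coe_mul_geometric_of_norm_lt_one hx) (hasSum_geometric_of_norm_lt_one hy)
      (summable_norm_coe_mul_geometric hx) (summable_norm_geometric_of_norm_lt_one hy)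
  have hright : HasSum (fun n ↦ ∑ j ∈ range (n + 1), x ^ j * (((n - j : ℕ) : 𝕜) * y ^ (n - j)))
      ((1 - x)⁻¹ * (y / (1 - y) ^ 2)) :=
    hasSum_sum_range_mul (f := (x ^ ·)) (g := fun n : ℕ ↦ (n : 𝕜) * y ^ n)
      (hasSum_geometric_of_norm_lt_one hx) (hasSum_coe_mul_geometric_of_norm_lt_one hy)
      (summable_norm_geometric_of_norm_lt_one hx) (summable_norm_coe_mul_geometric hy)
  have hvalue : (1 - x * y) / ((1 - x) ^ 2 * (1 - y) ^ 2) =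
      x / (1 - x) ^ 2 * (1 - y)⁻¹ + (1 - x)⁻¹ * (y / (1 - y) ^ 2) + (1 - x)⁻¹ * (1 - y)⁻¹ := by
    field_simp
    ring
  rw [hvalue]
  convert (hleft.add hright).add (hasSum_geomConv hx hy) using 2 with n
  exact succ_mul_geomConv n

lemma tsum_succ_mul_geomConv_div_tsum_geomConv (hx : ‖x‖ < 1) (hy : ‖y‖ < 1) :
    (∑' n : ℕ, ((n : 𝕜) + 1) * geomConv x y n) / ∑' n, geomConv x y n =
      (1 - x * y) / ((1 - x) * (1 - y)) := by
  have hx₁ := one_sub_ne_zero_of_norm_lt_one hx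
  have hy₁ := one_sub_ne_zero_of_norm_lt_one hy
  rw [(hasSum_succ_mul_geomConv hx hy).tsum_eq, (hasSum_geomConv hx hy).tsum_eq]
  field_simp

end GeomConv

theorem stmt_9_general
    (μb μv θ p0 p1 al be r K : ℝ) (π1 : ℕ → ℝ)
    (hμb : μb ∈ Set.Ioo (0:ℝ) 1)
    (hμv : μv ∈ Set.Ioo (0:ℝ) 1) (hθ : θ ∈ Set.Ioo (0:ℝ) 1)
    (hp0m : p0 ∈ Set.Ioo (0:ℝ) 1) (hp1m : p1 ∈ Set.Ioo (0:ℝ) 1)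
    (hal : al = p1 * (1 - μb) / ((1 - p1) * μb))
    (hbe : be = θ / (1 - θ))
    (hr : r = (be + p0 * (1 - μv) + (1 - p0) * μv -
        Real.sqrt ((be + p0 * (1 - μv) + (1 - p0) * μv) ^ 2 -
          4 * p0 * (1 - p0) * μv * (1 - μv))) / (2 * (1 - p0) * μv))
    (hK : K = (1 - p1) * μb * (1 - r) * (1 - al) /
        ((1 - p1) * μb * (1 - r) * (1 - al) *
          (θ + (1 - θ) * (1 - p0) * μv * (1 - r) + p0 * (1 - θ)) + p0 * θ))
    (hπ1k : ∀ k : ℕ, 1 ≤ k →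
      π1 k = K * (p0 * θ / ((1 - p1) * μb)) * ∑ j ∈ Finset.range k, r ^ j * al ^ (k - 1 - j))
    (hal1 : al < 1) :
    Summable (fun k : ℕ => ((k : ℝ) + 1) * π1 (k + 1)) ∧
    (∑' k : ℕ, ((k : ℝ) + 1) * π1 (k + 1)) / (∑' k : ℕ, π1 (k + 1))
      = (1 - r * al) / ((1 - al) * (1 - r)) := by
  obtain ⟨hμb₀, hμb₁⟩ := hμb
  obtain ⟨hμv₀, hμv₁⟩ := hμv
  obtain ⟨hθ₀, hθ₁⟩ := hθ
  obtain ⟨hp0₀, hp0₁⟩ := hp0m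
  obtain ⟨hp1₀, hp1₁⟩ := hp1m
  rw [← sub_pos] at hμb₁ hμv₁ hθ₁ hp0₁ hp1₁ hal1
  obtain ⟨hr₀, hr₁⟩ : r ∈ Set.Ioo 0 1 := by
    have hbe₀ : 0 < be := by rw [hbe]; positivity
    rw [hr]
    convert quadratic_smaller_root_mem_Ioo (a := (1 - p0) * μv) (b := be) (c := p0 * (1 - μv))
      (by positivity) hbe₀ (by positivity) using 2 <;> ring_nf
  rw [← sub_pos] at hr₁
  have hal₀ : 0 < al := by rw [hal]; positivity
  have hK₀ : 0 < K := by rw [hK]; positivity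
  set C := K * (p0 * θ / ((1 - p1) * μb))
  have hC : C ≠ 0 := by positivity
  have hπ : ∀ k, π1 (k + 1) = C * geomConv r al k := fun k ↦ by
    simpa [geomConv] using hπ1k (k + 1) k.succ_pos
  have hr' : ‖r‖ < 1 := by rwa [Real.norm_of_nonneg hr₀.le, ← sub_pos]
  have hal' : ‖al‖ < 1 := by rwa [Real.norm_of_nonneg hal₀.le, ← sub_pos]
  simp_rw [hπ, mul_left_comm _ C]
  refine ⟨((hasSum_succ_mul_geomConv hr' hal').mul_left C).summable, ?_⟩
  rw [tsum_mul_left, tsum_mul_left, mul_div_mul_left _ _ hC, mul_comm (1 - al)]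
  exact tsum_succ_mul_geomConv_div_tsum_geomConv hr' hal'

/-- Geo/Geo/1 with multiple working vacations, partially observable case.
Conditional mean queue length in a regular busy period:
E[L₁] = (Σ_{k≥1} k π_{k1}) / (Σ_{k≥1} π_{k1}) = (1 - rα̃)/((1-α̃)(1-r)). -/
theorem stmt_9
    (p μb μv θ q0 q1 p0 p1 al be r K : ℝ) (π0 π1 : ℕ → ℝ)
    (hp : p ∈ Set.Ioo (0:ℝ) 1) (hμb : μb ∈ Set.Ioo (0:ℝ) 1)
    (hμv : μv ∈ Set.Ioo (0:ℝ) 1) (hθ : θ ∈ Set.Ioo (0:ℝ) 1)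
    (hq0 : q0 ∈ Set.Icc (0:ℝ) 1) (hq1 : q1 ∈ Set.Icc (0:ℝ) 1)
    (hp0 : p0 = p * q0) (hp1 : p1 = p * q1)
    (hp0m : p0 ∈ Set.Ioo (0:ℝ) 1) (hp1m : p1 ∈ Set.Ioo (0:ℝ) 1)
    (hal : al = p1 * (1 - μb) / ((1 - p1) * μb))
    (hbe : be = θ / (1 - θ))
    (hr : r = (be + p0 * (1 - μv) + (1 - p0) * μv -
        Real.sqrt ((be + p0 * (1 - μv) + (1 - p0) * μv) ^ 2 -
          4 * p0 * (1 - p0) * μv * (1 - μv))) / (2 * (1 - p0) * μv))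
    (hK : K = (1 - p1) * μb * (1 - r) * (1 - al) /
        ((1 - p1) * μb * (1 - r) * (1 - al) *
          (θ + (1 - θ) * (1 - p0) * μv * (1 - r) + p0 * (1 - θ)) + p0 * θ))
    (hπ00 : π0 0 = K * (θ + (1 - θ) * (1 - p0) * μv * (1 - r)))
    (hπ0k : ∀ k : ℕ, 1 ≤ k → π0 k = K * p0 * (1 - θ) * (1 - r) * r ^ (k - 1))
    (hπ1k : ∀ k : ℕ, 1 ≤ k →
      π1 k = K * (p0 * θ / ((1 - p1) * μb)) * ∑ j ∈ Finset.range k, r ^ j * al ^ (k - 1 - j))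
    (hal1 : al < 1) :
    Summable (fun k : ℕ => ((k : ℝ) + 1) * π1 (k + 1)) ∧
    (∑' k : ℕ, ((k : ℝ) + 1) * π1 (k + 1)) / (∑' k : ℕ, π1 (k + 1))
      = (1 - r * al) / ((1 - al) * (1 - r)) :=
  stmt_9_general μb μv θ p0 p1 al be r K π1 hμb hμv hθ hp0m hp1m hal hbe hr hK hπ1k hal1
end

section
/- Assume α̃ < 1 (hence 0 < r < 1). Then the mean queue length satisfies E[L] = Σ_{k≥1} k·π_{k0} + Σ_{k≥1} k·π_{k1} = (K·p(0)/(1−r))·[θ̄ + θ(1 − rα̃)/(p̄(1)μ_b(1−r)(1−α̃)²)]. -/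
/-!
With `a = (1 - p₀) μ_v`, `c = p₀ (1 - μ_v)` and `b = β + a + c`, the number `r` is the smaller root
of `a x² - b x + c`, and `b > a + c` (as `β > 0`) places it in `(0, 1)`. The first mean is then a derivative of
the geometric series. For the second, the weight `k + 1` attached to the convolution
`∑_{j ≤ k} r^j α̃^(k-j)` splits as `(j + 1) + (k - j)`, turning the series into two Cauchy products
of geometric-type series with sums `1 / ((1 - r)² (1 - α̃))` and `α̃ / ((1 - r) (1 - α̃)²)`.
-/

open Finset

lemma smaller_root_mem_Ioo_zero_one {a b c : ℝ} (ha : 0 < a) (hc : 0 < c) (hb : a + c < b) :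
    (b - √(b ^ 2 - 4 * a * c)) / (2 * a) ∈ Set.Ioo 0 1 := by
  have hsqrt_lt : √(b ^ 2 - 4 * a * c) < b := by
    rw [Real.sqrt_lt' (by linarith)]
    nlinarith [mul_pos ha hc]
  have hlt_sqrt : b - 2 * a < √(b ^ 2 - 4 * a * c) :=
    Real.lt_sqrt_of_sq_lt (by nlinarith)
  constructor
  · exact div_pos (by linarith) (by linarith)
  · rw [div_lt_one (by linarith)]
    linarith

lemma hasSum_add_one_mul_geometric {r : ℝ} (hr : ‖r‖ < 1) :
    HasSum (fun n : ℕ => ((n : ℝ) + 1) * r ^ n) (1 / (1 - r) ^ 2) := by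
  simpa using hasSum_choose_mul_geometric_of_norm_lt_one 1 hr

lemma hasSum_add_one_mul_sum_range_pow_mul_pow {r a : ℝ} (hr : ‖r‖ < 1) (ha : ‖a‖ < 1) :
    HasSum (fun k : ℕ => ((k : ℝ) + 1) * ∑ j ∈ range (k + 1), r ^ j * a ^ (k - j))
      ((1 - r * a) / ((1 - r) ^ 2 * (1 - a) ^ 2)) := by
  have hr1 : 1 - r ≠ 0 := sub_ne_zero.2 (ne_of_lt (abs_lt.1 hr).2).symm
  have ha1 : 1 - a ≠ 0 := sub_ne_zero.2 (ne_of_lt (abs_lt.1 ha).2).symm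
  have hgr := hasSum_geometric_of_norm_lt_one hr
  have hga := hasSum_geometric_of_norm_lt_one ha
  have hsr := hasSum_add_one_mul_geometric hr
  have hsa := hasSum_coe_mul_geometric_of_norm_lt_one ha
  have hcauchy₁ := hasSum_sum_range_mul_of_summable_norm
    (f := fun n : ℕ => ((n : ℝ) + 1) * r ^ n) (g := (a ^ ·)) hsr.summable.abs hga.summable.abs
  have hcauchy₂ := hasSum_sum_range_mul_of_summable_norm
    (f := (r ^ ·)) (g := fun n : ℕ => (n : ℝ) * a ^ n) hgr.summable.abs hsa.summable.abs
  rw [hsr.tsum_eq, hga.tsum_eq] at hcauchy₁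
  rw [hgr.tsum_eq, hsa.tsum_eq] at hcauchy₂
  have hsum : 1 / (1 - r) ^ 2 * (1 - a)⁻¹ + (1 - r)⁻¹ * (a / (1 - a) ^ 2)
      = (1 - r * a) / ((1 - r) ^ 2 * (1 - a) ^ 2) := by
    field_simp
    ring
  rw [← hsum]
  refine (hcauchy₁.add hcauchy₂).congr_fun fun k => ?_
  rw [mul_sum, ← sum_add_distrib]
  refine sum_congr rfl fun j hj => ?_
  rw [Nat.cast_sub (mem_range_succ_iff.1 hj)]
  ring

lemma HasSum.nat_mul_of_add_one_mul {f : ℕ → ℝ} {s : ℝ}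
    (h : HasSum (fun k : ℕ => ((k : ℝ) + 1) * f (k + 1)) s) :
    HasSum (fun k : ℕ => (k : ℝ) * f k) s :=
  (hasSum_nat_add_iff' 1).1 (by simpa using h)

theorem stmt_10_general
    (μb μv θ p0 p1 al be r K : ℝ) (π0 π1 : ℕ → ℝ)
    (hμb : μb ∈ Set.Ioo (0:ℝ) 1)
    (hμv : μv ∈ Set.Ioo (0:ℝ) 1) (hθ : θ ∈ Set.Ioo (0:ℝ) 1)
    (hp0m : p0 ∈ Set.Ioo (0:ℝ) 1) (hp1m : p1 ∈ Set.Ioo (0:ℝ) 1)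
    (hal : al = p1 * (1 - μb) / ((1 - p1) * μb))
    (hbe : be = θ / (1 - θ))
    (hr : r = (be + p0 * (1 - μv) + (1 - p0) * μv -
        Real.sqrt ((be + p0 * (1 - μv) + (1 - p0) * μv) ^ 2 -
          4 * p0 * (1 - p0) * μv * (1 - μv))) / (2 * (1 - p0) * μv))
    (hπ0k : ∀ k : ℕ, 1 ≤ k → π0 k = K * p0 * (1 - θ) * (1 - r) * r ^ (k - 1))
    (hπ1k : ∀ k : ℕ, 1 ≤ k →
      π1 k = K * (p0 * θ / ((1 - p1) * μb)) * ∑ j ∈ Finset.range k, r ^ j * al ^ (k - 1 - j))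
    (hal1 : al < 1) :
    Summable (fun k : ℕ => (k : ℝ) * π0 k) ∧
    Summable (fun k : ℕ => ((k : ℝ) + 1) * π1 (k + 1)) ∧
    (∑' k : ℕ, (k : ℝ) * π0 k) + (∑' k : ℕ, ((k : ℝ) + 1) * π1 (k + 1))
      = K * p0 / (1 - r) *
          ((1 - θ) + θ * (1 - r * al) / ((1 - p1) * μb * (1 - r) * (1 - al) ^ 2)) := by
  obtain ⟨hr0, hr1⟩ : r ∈ Set.Ioo 0 1 := by
    have hbe0 : 0 < be := hbe ▸ div_pos hθ.1 (sub_pos.2 hθ.2)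
    rw [hr, show 4 * p0 * (1 - p0) * μv * (1 - μv) = 4 * ((1 - p0) * μv) * (p0 * (1 - μv)) by ring,
      show 2 * (1 - p0) * μv = 2 * ((1 - p0) * μv) by ring]
    exact smaller_root_mem_Ioo_zero_one (mul_pos (sub_pos.2 hp0m.2) hμv.1)
      (mul_pos hp0m.1 (sub_pos.2 hμv.2)) (by linarith)
  have hal0 : 0 ≤ al := hal ▸ div_nonneg (mul_nonneg hp1m.1.le (sub_pos.2 hμb.2).le)
    (mul_nonneg (sub_pos.2 hp1m.2).le hμb.1.le)
  have hrn : ‖r‖ < 1 := by rwa [Real.norm_of_nonneg hr0.le]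
  have haln : ‖al‖ < 1 := by rwa [Real.norm_of_nonneg hal0]
  have hmean₀ : HasSum (fun k : ℕ => (k : ℝ) * π0 k) (K * p0 * (1 - θ) / (1 - r)) := by
    have hval : K * p0 * (1 - θ) * (1 - r) * (1 / (1 - r) ^ 2) = K * p0 * (1 - θ) / (1 - r) := by
      field_simp [sub_ne_zero.2 hr1.ne']
    rw [← hval]
    refine HasSum.nat_mul_of_add_one_mul
      (((hasSum_add_one_mul_geometric hrn).mul_left _).congr_fun fun k => ?_)
    rw [hπ0k (k + 1) le_add_self, Nat.add_sub_cancel]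
    ring
  have hmean₁ : HasSum (fun k : ℕ => ((k : ℝ) + 1) * π1 (k + 1))
      (K * (p0 * θ / ((1 - p1) * μb)) * ((1 - r * al) / ((1 - r) ^ 2 * (1 - al) ^ 2))) := by
    refine ((hasSum_add_one_mul_sum_range_pow_mul_pow hrn haln).mul_left _).congr_fun fun k => ?_
    rw [hπ1k (k + 1) le_add_self, Nat.add_sub_cancel]
    ring
  refine ⟨hmean₀.summable, hmean₁.summable, ?_⟩
  rw [hmean₀.tsum_eq, hmean₁.tsum_eq]
  field_simp [sub_ne_zero.2 hr1.ne', sub_ne_zero.2 hal1.ne']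

/-- Geo/Geo/1 with multiple working vacations, partially observable case.
Mean queue length:
E[L] = Σ_{k≥1} k π_{k0} + Σ_{k≥1} k π_{k1}
     = (K p(0)/(1-r)) [θ̄ + θ(1 - rα̃)/(p̄(1) μ_b (1-r)(1-α̃)²)]. -/
theorem stmt_10
    (p μb μv θ q0 q1 p0 p1 al be r K : ℝ) (π0 π1 : ℕ → ℝ)
    (hp : p ∈ Set.Ioo (0:ℝ) 1) (hμb : μb ∈ Set.Ioo (0:ℝ) 1)
    (hμv : μv ∈ Set.Ioo (0:ℝ) 1) (hθ : θ ∈ Set.Ioo (0:ℝ) 1)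
    (hq0 : q0 ∈ Set.Icc (0:ℝ) 1) (hq1 : q1 ∈ Set.Icc (0:ℝ) 1)
    (hp0 : p0 = p * q0) (hp1 : p1 = p * q1)
    (hp0m : p0 ∈ Set.Ioo (0:ℝ) 1) (hp1m : p1 ∈ Set.Ioo (0:ℝ) 1)
    (hal : al = p1 * (1 - μb) / ((1 - p1) * μb))
    (hbe : be = θ / (1 - θ))
    (hr : r = (be + p0 * (1 - μv) + (1 - p0) * μv -
        Real.sqrt ((be + p0 * (1 - μv) + (1 - p0) * μv) ^ 2 -
          4 * p0 * (1 - p0) * μv * (1 - μv))) / (2 * (1 - p0) * μv))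
    (hK : K = (1 - p1) * μb * (1 - r) * (1 - al) /
        ((1 - p1) * μb * (1 - r) * (1 - al) *
          (θ + (1 - θ) * (1 - p0) * μv * (1 - r) + p0 * (1 - θ)) + p0 * θ))
    (hπ00 : π0 0 = K * (θ + (1 - θ) * (1 - p0) * μv * (1 - r)))
    (hπ0k : ∀ k : ℕ, 1 ≤ k → π0 k = K * p0 * (1 - θ) * (1 - r) * r ^ (k - 1))
    (hπ1k : ∀ k : ℕ, 1 ≤ k →
      π1 k = K * (p0 * θ / ((1 - p1) * μb)) * ∑ j ∈ Finset.range k, r ^ j * al ^ (k - 1 - j))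
    (hal1 : al < 1) :
    Summable (fun k : ℕ => (k : ℝ) * π0 k) ∧
    Summable (fun k : ℕ => ((k : ℝ) + 1) * π1 (k + 1)) ∧
    (∑' k : ℕ, (k : ℝ) * π0 k) + (∑' k : ℕ, ((k : ℝ) + 1) * π1 (k + 1))
      = K * p0 / (1 - r) *
          ((1 - θ) + θ * (1 - r * al) / ((1 - p1) * μb * (1 - r) * (1 - al) ^ 2)) :=
  stmt_10_general μb μv θ p0 p1 al be r K π0 π1 hμb hμv hθ hp0m hp1m hal hbe hr hπ0k hπ1k hal1
end

section
/- Let n ≥ 1 be an integer and z ≠ 0 a real number with 1 − μ̄_v θ̄ z ≠ 0, 1 − μ̄_b z ≠ 0, and D(z) := μ_b(1 − μ̄_v θ̄ z) − μ_v θ̄(1 − μ̄_b z) ≠ 0. Write A(z) = μ_v θ̄ z/(1 − μ̄_v θ̄ z), B(z) = μ_b z/(1 − μ̄_b z), and T(z) = θ/(1 − μ̄_v θ̄ z). Then μ_v·[A(z)ⁿ + Σ_{j=0}^{n−1} T(z)·A(z)^j·B(z)^{n−j}] + μ̄_v·[A(z)^{n+1} + Σ_{j=0}^{n} T(z)·A(z)^j·B(z)^{n+1−j}]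 + A(z) + T(z)·B(z) = (μ_v/(1 − μ̄_v θ̄ z))·A(z)ⁿ·(1 − θμ_b/D(z)) + (θμ_b/D(z))·B(z)ⁿ·(μ_v + μ̄_v μ_b z/(1 − μ̄_b z)) + A(z) + T(z)·B(z). -/
/-!
With `A`, `B`, `T` as in the statement and `c = θ μ_b / D`, one has `T B = c (B - A)`. Since
`(B - A) Σ_{j<m} A^j B^(m-j) = B (B^m - A^m)`, each convolution sum collapses to `c (B^m - A^m)`,
and the claim becomes a polynomial identity in `A`, `B`, `c` together with
`μ_v + μ̄_v A = μ_v / (1 - μ̄_v θ̄ z)`; dividing by `B - A` is legitimate because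
`B - A = z D / ((1 - μ̄_b z)(1 - μ̄_v θ̄ z))`.
-/

open Finset

lemma sum_range_pow_mul_pow_sub_mul_sub {R : Type*} [CommRing R] (x y : R) (n : ℕ) :
    (∑ i ∈ range n, x ^ i * y ^ (n - i)) * (y - x) = y * (y ^ n - x ^ n) := by
  have hsucc := geom_sum₂_succ_eq x y (n := n)
  rw [sum_range_succ, Nat.sub_self, pow_zero, mul_one, add_comm, add_left_cancel_iff] at hsucc
  rw [hsucc, mul_assoc, geom_sum₂_comm, geom_sum₂_mul]

section WorkingVacation

variable {K : Type*} [Field K] {A B T c : K}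

lemma sum_range_mul_pow_mul_pow_sub (hTB : T * B = c * (B - A)) (hAB : A ≠ B) (m : ℕ) :
    ∑ j ∈ range m, T * A ^ j * B ^ (m - j) = c * (B ^ m - A ^ m) := by
  have hBA : B - A ≠ 0 := sub_ne_zero.mpr hAB.symm
  apply mul_right_cancel₀ hBA
  calc (∑ j ∈ range m, T * A ^ j * B ^ (m - j)) * (B - A)
      = T * ((∑ j ∈ range m, A ^ j * B ^ (m - j)) * (B - A)) := by
        simp only [sum_mul, mul_sum, mul_assoc]
    _ = T * B * (B ^ m - A ^ m) := by rw [sum_range_pow_mul_pow_sub_mul_sub, mul_assoc]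
    _ = c * (B ^ m - A ^ m) * (B - A) := by rw [hTB]; ring

lemma mixture_sojourn_eq (μ : K) (hTB : T * B = c * (B - A)) (hAB : A ≠ B) (n : ℕ) :
    μ * (A ^ n + ∑ j ∈ range n, T * A ^ j * B ^ (n - j)) +
        (1 - μ) * (A ^ (n + 1) + ∑ j ∈ range (n + 1), T * A ^ j * B ^ (n + 1 - j)) =
      (μ + (1 - μ) * A) * A ^ n * (1 - c) + c * B ^ n * (μ + (1 - μ) * B) := by
  rw [sum_range_mul_pow_mul_pow_sub hTB hAB, sum_range_mul_pow_mul_pow_sub hTB hAB]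
  ring

end WorkingVacation

theorem stmt_12_general
    (μb μv θ : ℝ)
    (n : ℕ) (z : ℝ) (hz : z ≠ 0)
    (h1 : 1 - (1 - μv) * (1 - θ) * z ≠ 0) (h2 : 1 - (1 - μb) * z ≠ 0)
    (hD : μb * (1 - (1 - μv) * (1 - θ) * z) - μv * (1 - θ) * (1 - (1 - μb) * z) ≠ 0) :
    μv * ((μv * (1 - θ) * z / (1 - (1 - μv) * (1 - θ) * z)) ^ n +
        ∑ j ∈ Finset.range n, θ / (1 - (1 - μv) * (1 - θ) * z) *
          (μv * (1 - θ) * z / (1 - (1 - μv) * (1 - θ) * z)) ^ j *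
          (μb * z / (1 - (1 - μb) * z)) ^ (n - j)) +
      (1 - μv) * ((μv * (1 - θ) * z / (1 - (1 - μv) * (1 - θ) * z)) ^ (n + 1) +
        ∑ j ∈ Finset.range (n + 1), θ / (1 - (1 - μv) * (1 - θ) * z) *
          (μv * (1 - θ) * z / (1 - (1 - μv) * (1 - θ) * z)) ^ j *
          (μb * z / (1 - (1 - μb) * z)) ^ (n + 1 - j)) +
      μv * (1 - θ) * z / (1 - (1 - μv) * (1 - θ) * z) +
      θ / (1 - (1 - μv) * (1 - θ) * z) * (μb * z / (1 - (1 - μb) * z))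
    = μv / (1 - (1 - μv) * (1 - θ) * z) *
        (μv * (1 - θ) * z / (1 - (1 - μv) * (1 - θ) * z)) ^ n *
        (1 - θ * μb / (μb * (1 - (1 - μv) * (1 - θ) * z) - μv * (1 - θ) * (1 - (1 - μb) * z))) +
      θ * μb / (μb * (1 - (1 - μv) * (1 - θ) * z) - μv * (1 - θ) * (1 - (1 - μb) * z)) *
        (μb * z / (1 - (1 - μb) * z)) ^ n *
        (μv + (1 - μv) * μb * z / (1 - (1 - μb) * z)) +
      μv * (1 - θ) * z / (1 - (1 - μv) * (1 - θ) * z) +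
      θ / (1 - (1 - μv) * (1 - θ) * z) * (μb * z / (1 - (1 - μb) * z)) := by
  set D := μb * (1 - (1 - μv) * (1 - θ) * z) - μv * (1 - θ) * (1 - (1 - μb) * z)
  have hBA : μb * z / (1 - (1 - μb) * z) - μv * (1 - θ) * z / (1 - (1 - μv) * (1 - θ) * z) =
      z * D / ((1 - (1 - μb) * z) * (1 - (1 - μv) * (1 - θ) * z)) := by
    rw [div_sub_div _ _ h2 h1]
    ring
  have hAB : μv * (1 - θ) * z / (1 - (1 - μv) * (1 - θ) * z) ≠ μb * z / (1 - (1 - μb) * z) := by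
    rw [ne_comm, ← sub_ne_zero, hBA]
    exact div_ne_zero (mul_ne_zero hz hD) (mul_ne_zero h2 h1)
  have hTB : θ / (1 - (1 - μv) * (1 - θ) * z) * (μb * z / (1 - (1 - μb) * z)) =
      θ * μb / D * (μb * z / (1 - (1 - μb) * z) -
        μv * (1 - θ) * z / (1 - (1 - μv) * (1 - θ) * z)) := by
    rw [hBA]; field_simp
  have hμA : μv + (1 - μv) * (μv * (1 - θ) * z / (1 - (1 - μv) * (1 - θ) * z)) =
      μv / (1 - (1 - μv) * (1 - θ) * z) := by
    field_simp; ring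
  rw [mixture_sojourn_eq μv hTB hAB n, hμA]
  ring

/-- Closed form of the PGF W̃₀*(z) of the sojourn time of a customer joining the observable
system in state (n,0). With A(z) = μ_v θ̄ z/(1−μ̄_v θ̄ z), B(z) = μ_b z/(1−μ̄_b z),
T(z) = θ/(1−μ̄_v θ̄ z), D(z) = μ_b(1−μ̄_v θ̄ z) − μ_v θ̄(1−μ̄_b z):
μ_v[Aⁿ + Σ_{j<n} T A^j B^{n−j}] + μ̄_v[A^{n+1} + Σ_{j≤n} T A^j B^{n+1−j}] + A + T B
  = (μ_v/(1−μ̄_v θ̄ z)) Aⁿ (1 − θμ_b/D) + (θμ_b/D) Bⁿ (μ_v + μ̄_v μ_b z/(1−μ̄_b z)) + A + T B. -/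
theorem stmt_12
    (μb μv θ : ℝ)
    (hμb : μb ∈ Set.Ioo (0:ℝ) 1) (hμv : μv ∈ Set.Ioo (0:ℝ) 1) (hθ : θ ∈ Set.Ioo (0:ℝ) 1)
    (n : ℕ) (hn : 1 ≤ n) (z : ℝ) (hz : z ≠ 0)
    (h1 : 1 - (1 - μv) * (1 - θ) * z ≠ 0) (h2 : 1 - (1 - μb) * z ≠ 0)
    (hD : μb * (1 - (1 - μv) * (1 - θ) * z) - μv * (1 - θ) * (1 - (1 - μb) * z) ≠ 0) :
    μv * ((μv * (1 - θ) * z / (1 - (1 - μv) * (1 - θ) * z)) ^ n +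
        ∑ j ∈ Finset.range n, θ / (1 - (1 - μv) * (1 - θ) * z) *
          (μv * (1 - θ) * z / (1 - (1 - μv) * (1 - θ) * z)) ^ j *
          (μb * z / (1 - (1 - μb) * z)) ^ (n - j)) +
      (1 - μv) * ((μv * (1 - θ) * z / (1 - (1 - μv) * (1 - θ) * z)) ^ (n + 1) +
        ∑ j ∈ Finset.range (n + 1), θ / (1 - (1 - μv) * (1 - θ) * z) *
          (μv * (1 - θ) * z / (1 - (1 - μv) * (1 - θ) * z)) ^ j *
          (μb * z / (1 - (1 - μb) * z)) ^ (n + 1 - j)) +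
      μv * (1 - θ) * z / (1 - (1 - μv) * (1 - θ) * z) +
      θ / (1 - (1 - μv) * (1 - θ) * z) * (μb * z / (1 - (1 - μb) * z))
    = μv / (1 - (1 - μv) * (1 - θ) * z) *
        (μv * (1 - θ) * z / (1 - (1 - μv) * (1 - θ) * z)) ^ n *
        (1 - θ * μb / (μb * (1 - (1 - μv) * (1 - θ) * z) - μv * (1 - θ) * (1 - (1 - μb) * z))) +
      θ * μb / (μb * (1 - (1 - μv) * (1 - θ) * z) - μv * (1 - θ) * (1 - (1 - μb) * z)) *
        (μb * z / (1 - (1 - μb) * z)) ^ n *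
        (μv + (1 - μv) * μb * z / (1 - (1 - μb) * z)) +
      μv * (1 - θ) * z / (1 - (1 - μv) * (1 - θ) * z) +
      θ / (1 - (1 - μv) * (1 - θ) * z) * (μb * z / (1 - (1 - μb) * z)) :=
  stmt_12_general μb μv θ n z hz h1 h2 hD
end

section
/- Let n ∈ ℕ and define (near z = 1) the function W(z) = (μ_v/(1 − μ̄_v θ̄ z))·(μ_v θ̄ z/(1 − μ̄_v θ̄ z))ⁿ·(1 − θμ_b/D(z)) + (θμ_b/D(z))·(μ_b z/(1 − μ̄_b z))ⁿ·(μ_v + μ̄_v μ_b z/(1 − μ̄_b z)) + μ_v θ̄ z/(1 − μ̄_v θ̄ z) + (θ/(1 − μ̄_v θ̄ z))·(μ_b z/(1 − μ̄_b z)), where D(z) = μ_b(1 − μ̄_v θ̄ z) − μ_v θ̄(1 − μ̄_b z). Then W is differentiable at z = 1 and W'(1) = (n+1)/μ_b − 1 + ((μ_b − μ_v)/(θμ_b))·[1 − ((μ_v − μ_v θ)/(θ + μ_v − θμ_v))^{n+1}] + (θ + μ_b − θμ_b)/(μ_b(θ + μ_v − θμ_v)). -/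
/-!
Write W = a·gⁿ·(1 − q) + q·hⁿ·k + g + t·h with a = μ_v/(1 − μ̄_v θ̄ z), g = μ_v θ̄ z/(1 − μ̄_v θ̄ z),
q = θμ_b/D, h = μ_b z/(1 − μ̄_b z), k = μ_v + μ̄_v h and t = θ/(1 − μ̄_v θ̄ z). Since D(1) = θμ_b,
the factors q, h, k all equal 1 at z = 1, so the product rule collapses to
W'(1) = q'(1)(1 − a(1) g(1)ⁿ) + n h'(1) + k'(1) + g'(1) + t'(1) + t(1) h'(1):
the derivative of gⁿ is multiplied by 1 − q(1) = 0 and never enters. Every factor is a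
linear-fractional function of z, and what remains is rational algebra.
-/

lemma hasDerivAt_one_sub_mul (b x : ℝ) : HasDerivAt (fun z => 1 - b * z) (-b) x := by
  simpa using ((hasDerivAt_id' x).const_mul b).const_sub 1

lemma hasDerivAt_mul_div_one_sub_mul (a b x : ℝ) (hx : 1 - b * x ≠ 0) :
    HasDerivAt (fun z => a * z / (1 - b * z)) (a / (1 - b * x) ^ 2) x := by
  refine (((hasDerivAt_id' x).const_mul a).div (hasDerivAt_one_sub_mul b x) hx).congr_deriv ?_
  ring

lemma hasDerivAt_div_one_sub_mul (a b x : ℝ) (hx : 1 - b * x ≠ 0) :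
    HasDerivAt (fun z => a / (1 - b * z)) (a * b / (1 - b * x) ^ 2) x := by
  refine ((hasDerivAt_const x a).div (hasDerivAt_one_sub_mul b x) hx).congr_deriv ?_
  ring

lemma hasDerivAt_sojourn_of_eq_one {a g q h k t : ℝ → ℝ} {a' g' q' h' k' t' x : ℝ} (n : ℕ)
    (ha : HasDerivAt a a' x) (hg : HasDerivAt g g' x) (hq : HasDerivAt q q' x)
    (hh : HasDerivAt h h' x) (hk : HasDerivAt k k' x) (ht : HasDerivAt t t' x)
    (hq1 : q x = 1) (hh1 : h x = 1) (hk1 : k x = 1) :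
    HasDerivAt (fun z => a z * g z ^ n * (1 - q z) + q z * h z ^ n * k z + g z + t z * h z)
      (-(a x * g x ^ n * q') + q' + n * h' + k' + g' + t' + t x * h') x := by
  refine (((((ha.mul (hg.fun_pow n)).mul ((hasDerivAt_const x 1).sub hq)).add
    ((hq.mul (hh.fun_pow n)).mul hk)).add hg).add (ht.mul hh)).congr_deriv ?_
  simp only [Pi.mul_apply, Pi.sub_apply, hq1, hh1, hk1, one_pow, sub_self]
  ring

/-- The closed-form PGF W(z) of the sojourn time of a customer joining the observable system
in state (n,0) is differentiable at z = 1 with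
W'(1) = (n+1)/μ_b − 1 + ((μ_b−μ_v)/(θμ_b))[1 − ((μ_v−μ_vθ)/(θ+μ_v−θμ_v))^{n+1}]
        + (θ+μ_b−θμ_b)/(μ_b(θ+μ_v−θμ_v)). -/
theorem stmt_13
    (μb μv θ : ℝ)
    (hμb : μb ∈ Set.Ioo (0:ℝ) 1) (hμv : μv ∈ Set.Ioo (0:ℝ) 1) (hθ : θ ∈ Set.Ioo (0:ℝ) 1)
    (n : ℕ) :
    HasDerivAt (fun z : ℝ =>
        μv / (1 - (1 - μv) * (1 - θ) * z) *
          (μv * (1 - θ) * z / (1 - (1 - μv) * (1 - θ) * z)) ^ n *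
          (1 - θ * μb /
            (μb * (1 - (1 - μv) * (1 - θ) * z) - μv * (1 - θ) * (1 - (1 - μb) * z))) +
        θ * μb / (μb * (1 - (1 - μv) * (1 - θ) * z) - μv * (1 - θ) * (1 - (1 - μb) * z)) *
          (μb * z / (1 - (1 - μb) * z)) ^ n *
          (μv + (1 - μv) * μb * z / (1 - (1 - μb) * z)) +
        μv * (1 - θ) * z / (1 - (1 - μv) * (1 - θ) * z) +
        θ / (1 - (1 - μv) * (1 - θ) * z) * (μb * z / (1 - (1 - μb) * z)))
      (((n : ℝ) + 1) / μb - 1 +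
        (μb - μv) / (θ * μb) *
          (1 - ((μv - μv * θ) / (θ + μv - θ * μv)) ^ (n + 1)) +
        (θ + μb - θ * μb) / (μb * (θ + μv - θ * μv))) 1 := by
  obtain ⟨hb0, -⟩ := hμb
  obtain ⟨hv0, -⟩ := hμv
  obtain ⟨ht0, ht1⟩ := hθ
  have hA : 1 - (1 - μv) * (1 - θ) = θ + μv - θ * μv := by ring
  have hB : 1 - (1 - μb) = μb := by ring
  have hD : μb * (θ + μv - θ * μv) - μv * (1 - θ) * μb = θ * μb := by ring
  have hA0 : θ + μv - θ * μv ≠ 0 := by nlinarith [mul_pos hv0 (sub_pos.2 ht1)]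
  have hD0 : θ * μb ≠ 0 := by positivity
  have hA1 : 1 - (1 - μv) * (1 - θ) * 1 ≠ 0 := by rwa [mul_one, hA]
  have hB1 : 1 - (1 - μb) * 1 ≠ 0 := by rw [mul_one, hB]; exact hb0.ne'
  have hD1 : μb * (1 - (1 - μv) * (1 - θ) * 1) - μv * (1 - θ) * (1 - (1 - μb) * 1) ≠ 0 := by
    simpa only [mul_one, hA, hB, hD] using hD0
  have ha := hasDerivAt_div_one_sub_mul μv ((1 - μv) * (1 - θ)) 1 hA1
  have hg := hasDerivAt_mul_div_one_sub_mul (μv * (1 - θ)) ((1 - μv) * (1 - θ)) 1 hA1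
  have hq := (hasDerivAt_const (1 : ℝ) (θ * μb)).div
    (((hasDerivAt_one_sub_mul ((1 - μv) * (1 - θ)) 1).const_mul μb).sub
      ((hasDerivAt_one_sub_mul (1 - μb) 1).const_mul (μv * (1 - θ)))) hD1
  have hh := hasDerivAt_mul_div_one_sub_mul μb (1 - μb) 1 hB1
  have hk := (hasDerivAt_mul_div_one_sub_mul ((1 - μv) * μb) (1 - μb) 1 hB1).const_add μv
  have ht := hasDerivAt_div_one_sub_mul θ ((1 - μv) * (1 - θ)) 1 hA1
  refine (hasDerivAt_sojourn_of_eq_one n ha hg hq hh hk ht ?_ ?_ ?_).congr_deriv ?_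
    <;> simp only [Pi.div_apply, Pi.sub_apply, mul_one, hA, hB, hD]
  · exact div_self hD0
  · field_simp
  · field_simp
    ring
  · rw [show μv - μv * θ = μv * (1 - θ) by ring, pow_succ _ n]
    generalize (μv * (1 - θ) / (θ + μv - θ * μv)) ^ n = P
    generalize hAdef : θ + μv - θ * μv = A at hA0 ⊢
    field_simp
    rw [← hAdef]
    ring
end

section
/- Assume 0 ≤ r < 1 and 0 ≤ α̃ < 1, and let z ∈ (0,1]. Then the series Σ_{k=1}^{∞} [Σ_{j=0}^{k−1} r^j α̃^{k−1−j}]·[μ_b·(μ_b z/(1 − μ̄_b z))^k + μ̄_b·(μ_b z/(1 − μ̄_b z))^{k+1}] converges and its sum equals μ_b² z / ((1 − μ̄_b z − μ_b α̃ z)(1 − μ̄_b z − μ_b r z)). -/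
/-!
Put `B = μ_b z / (1 - μ̄_b z)`. The bracket factors as `(μ_b + μ̄_b B) B^k`, and the coefficient
`∑_{j<k} r^j α̃^{k-1-j}` is the `(k-1)`-st Cauchy-product coefficient of the geometric series in
`r` and `α̃`. Hence the series is `(μ_b + μ̄_b B) B / ((1 - r B)(1 - α̃ B))`, convergent because
`0 < B ≤ 1`; the closed form follows from `μ_b + μ̄_b B = μ_b / (1 - μ̄_b z)`.
-/

open Finset

theorem sum_range_succ_mul_pow_sub_mul_pow_succ {R : Type*} [CommRing R] (a b x : R) (n : ℕ) :
    (∑ j ∈ range (n + 1), a ^ j * b ^ (n - j)) * x ^ (n + 1) =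
      x * ∑ j ∈ range (n + 1), (a * x) ^ j * (b * x) ^ (n - j) := by
  rw [sum_mul, mul_sum]
  refine sum_congr rfl fun j hj => ?_
  have hxn : x ^ n = x ^ j * x ^ (n - j) := by
    rw [← pow_add, Nat.add_sub_cancel' (Nat.lt_succ_iff.mp (mem_range.mp hj))]
  rw [pow_succ, hxn]
  ring

section CauchyProductGeometric

variable {𝕜 : Type*} [NormedField 𝕜] [CompleteSpace 𝕜]

theorem hasSum_sum_range_mul_pow_geometric {a b : 𝕜} (ha : ‖a‖ < 1) (hb : ‖b‖ < 1) :
    HasSum (fun n => ∑ j ∈ range (n + 1), a ^ j * b ^ (n - j)) ((1 - a)⁻¹ * (1 - b)⁻¹) := by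
  have hab := hasSum_sum_range_mul_of_summable_norm
    (summable_geometric_of_lt_one (norm_nonneg a) ha |>.congr fun n => (norm_pow a n).symm)
    (summable_geometric_of_lt_one (norm_nonneg b) hb |>.congr fun n => (norm_pow b n).symm)
  rwa [tsum_geometric_of_norm_lt_one ha, tsum_geometric_of_norm_lt_one hb] at hab

theorem hasSum_sum_range_mul_pow_sub_one_mul_pow {a b x : 𝕜}
    (ha : ‖a * x‖ < 1) (hb : ‖b * x‖ < 1) :
    HasSum (fun k => (∑ j ∈ range k, a ^ j * b ^ (k - 1 - j)) * x ^ k)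
      (x * ((1 - a * x)⁻¹ * (1 - b * x)⁻¹)) := by
  have hshift : HasSum (fun n => (∑ j ∈ range (n + 1), a ^ j * b ^ (n + 1 - 1 - j)) * x ^ (n + 1))
      (x * ((1 - a * x)⁻¹ * (1 - b * x)⁻¹)) := by
    refine ((hasSum_sum_range_mul_pow_geometric ha hb).mul_left x).congr_fun fun n => ?_
    rw [Nat.add_sub_cancel]
    exact sum_range_succ_mul_pow_sub_mul_pow_succ a b x n
  simpa only [range_zero, sum_empty, zero_mul, zero_add] using
    HasSum.zero_add (f := fun k => (∑ j ∈ range k, a ^ j * b ^ (k - 1 - j)) * x ^ k) hshift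

end CauchyProductGeometric

/-- For 0 ≤ r < 1, 0 ≤ α̃ < 1 and z ∈ (0,1], the series
Σ_{k≥1} [Σ_{j<k} r^j α̃^{k−1−j}]·[μ_b B(z)^k + μ̄_b B(z)^{k+1}], B(z) = μ_b z/(1−μ̄_b z),
converges to μ_b² z / ((1 − μ̄_b z − μ_b α̃ z)(1 − μ̄_b z − μ_b r z)). -/
theorem stmt_16
    (μb r al : ℝ) (hμb : μb ∈ Set.Ioo (0:ℝ) 1)
    (hr0 : 0 ≤ r) (hr1 : r < 1) (hal0 : 0 ≤ al) (hal1 : al < 1)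
    (z : ℝ) (hz : z ∈ Set.Ioc (0:ℝ) 1) :
    Summable (fun k : ℕ =>
      (∑ j ∈ Finset.range k, r ^ j * al ^ (k - 1 - j)) *
        (μb * (μb * z / (1 - (1 - μb) * z)) ^ k +
          (1 - μb) * (μb * z / (1 - (1 - μb) * z)) ^ (k + 1))) ∧
    (∑' k : ℕ,
      (∑ j ∈ Finset.range k, r ^ j * al ^ (k - 1 - j)) *
        (μb * (μb * z / (1 - (1 - μb) * z)) ^ k +
          (1 - μb) * (μb * z / (1 - (1 - μb) * z)) ^ (k + 1)))
      = μb ^ 2 * z / ((1 - (1 - μb) * z - μb * al * z) * (1 - (1 - μb) * z - μb * r * z)) := by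
  obtain ⟨hμ0, hμ1⟩ := hμb
  obtain ⟨hz0, hz1⟩ := hz
  set D := 1 - (1 - μb) * z
  set B := μb * z / D with hB
  have hD0 : 0 < D := by nlinarith
  have hB0 : 0 < B := by positivity
  have hB1 : B ≤ 1 := by rw [div_le_one hD0]; linarith
  have hrB : ‖r * B‖ < 1 := by
    rw [Real.norm_of_nonneg (by positivity)]; nlinarith
  have halB : ‖al * B‖ < 1 := by
    rw [Real.norm_of_nonneg (by positivity)]; nlinarith
  have hsum : HasSum (fun k : ℕ => (∑ j ∈ range k, r ^ j * al ^ (k - 1 - j)) *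
      (μb * B ^ k + (1 - μb) * B ^ (k + 1)))
      ((μb + (1 - μb) * B) * (B * ((1 - r * B)⁻¹ * (1 - al * B)⁻¹))) :=
    ((hasSum_sum_range_mul_pow_sub_one_mul_pow hrB halB).mul_left _).congr_fun fun k => by ring
  refine ⟨hsum.summable, hsum.tsum_eq.trans ?_⟩
  have hrD : D - μb * r * z ≠ 0 := by nlinarith
  have halD : D - μb * al * z ≠ 0 := by nlinarith
  rw [hB]
  field_simp
  ring
end

section
/- Assume 0 ≤ r < 1 and 0 ≤ α̃ < 1, and define (near z = 1) the function W₁(z) = μ_b² z (1−α̃)(1−r) / ((1 − μ̄_b z − μ_b α̃ z)(1 − μ̄_b z − μ_b r z)). Then W₁ is differentiable at z = 1 and W₁'(1) = 1/(μ_b(1−r)) + (μ_b α̃ − μ_b + 1)/(μ_b(1−α̃)). -/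
/-!
Writing `p_x = μ_b (1 - x)`, the denominators factor as `1 - (1 - p_x) z`, so
`W₁(z) = z · G_α̃(z) · G_r(z)` with `G_x(z) = p_x / (1 - (1 - p_x) z)` the PGF of a geometric law
on `{0, 1, …}`. Each factor equals `1` at `z = 1`, so by the product rule `W₁'(1)` is the sum of
`1` and the geometric means `G_x'(1) = (1 - p_x) / p_x = 1 / p_x - 1`.
-/

theorem geometric_pgf_one {𝕜 : Type*} [Field 𝕜] {p : 𝕜} (hp : p ≠ 0) :
    p / (1 - (1 - p) * 1) = 1 := by
  rw [mul_one, sub_sub_cancel, div_self hp]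

theorem hasDerivAt_geometric_pgf_one {𝕜 : Type*} [NontriviallyNormedField 𝕜] {p : 𝕜}
    (hp : p ≠ 0) :
    HasDerivAt (fun z : 𝕜 => p / (1 - (1 - p) * z)) ((1 - p) / p) 1 := by
  have hden : HasDerivAt (fun z : 𝕜 => 1 - (1 - p) * z) (-(1 - p)) 1 := by
    simpa using ((hasDerivAt_id (1 : 𝕜)).const_mul (1 - p)).const_sub 1
  have hden_one : (1 : 𝕜) - (1 - p) * 1 = p := by ring
  refine ((hasDerivAt_const (1 : 𝕜) p).div hden (by rwa [hden_one])).congr_deriv ?_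
  rw [hden_one]
  field_simp
  ring

theorem stmt_17_general
    (μb r al : ℝ) (hμb : μb ∈ Set.Ioo (0:ℝ) 1)
    (hr1 : r < 1) (hal1 : al < 1) :
    HasDerivAt (fun z : ℝ =>
        μb ^ 2 * z * (1 - al) * (1 - r) /
          ((1 - (1 - μb) * z - μb * al * z) * (1 - (1 - μb) * z - μb * r * z)))
      (1 / (μb * (1 - r)) + (μb * al - μb + 1) / (μb * (1 - al))) 1 := by
  have hμ : μb ≠ 0 := hμb.1.ne'
  have hal : 1 - al ≠ 0 := sub_ne_zero.2 hal1.ne'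
  have hr : 1 - r ≠ 0 := sub_ne_zero.2 hr1.ne'
  have hpal := mul_ne_zero hμ hal
  have hpr := mul_ne_zero hμ hr
  have hW := ((hasDerivAt_id' (1 : ℝ)).fun_mul (hasDerivAt_geometric_pgf_one hpal)).fun_mul
    (hasDerivAt_geometric_pgf_one hpr)
  rw [geometric_pgf_one hpal, geometric_pgf_one hpr] at hW
  refine (hW.congr_deriv ?_).congr_of_eventuallyEq (.of_forall fun z => ?_)
  · field_simp
    ring
  · simp only [div_eq_mul_inv, mul_inv]
    ring

/-- The PGF W₁(z) = μ_b² z (1−α̃)(1−r) / ((1 − μ̄_b z − μ_b α̃ z)(1 − μ̄_b z − μ_b r z)) of the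
conditional sojourn time in a regular busy period is differentiable at z = 1 with
W₁'(1) = 1/(μ_b(1−r)) + (μ_b α̃ − μ_b + 1)/(μ_b(1−α̃)). -/
theorem stmt_17
    (μb r al : ℝ) (hμb : μb ∈ Set.Ioo (0:ℝ) 1)
    (hr0 : 0 ≤ r) (hr1 : r < 1) (hal0 : 0 ≤ al) (hal1 : al < 1) :
    HasDerivAt (fun z : ℝ =>
        μb ^ 2 * z * (1 - al) * (1 - r) /
          ((1 - (1 - μb) * z - μb * al * z) * (1 - (1 - μb) * z - μb * r * z)))
      (1 / (μb * (1 - r)) + (μb * al - μb + 1) / (μb * (1 - al))) 1 :=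
  stmt_17_general μb r al hμb hr1 hal1
end
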